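/- arXiv:2403.04401 — 12 statements merged into one kernel-verified Lean document; each statement's English description precedes it below -/
import Mathlib

section
/- If G is an (r,c)-constant graph on n vertices where n is congruent to 1 or 2 modulo 3, then c is congruent to 0 modulo 3. -/
/-- The number of edges of the subgraph of `G` induced by the open
neighbourhood of the vertex `v` (the quantity `e(v)`). -/
noncomputable def nbhdEdgeCount {V : Type*} (G : SimpleGraph V) (v : V) : ℕ :=
  Nat.card (SimpleGraph.induce (G.neighborSet v) G).edgeSet

private lemma finset_pair_eq {α : Type*} [DecidableEq α] {a b c d : α}
    (h : ({a,b} : Finset α) = {c,d}) : a = c ∧ b = d ∨ a = d ∧ b = c := by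
  have h' : ({a,b} : Set α) = {c,d} := by
    have := congrArg (fun s : Finset α => (s : Set α)) h
    simpa using this
  exact Set.pair_eq_pair_iff.1 h'

/-- Triangles of `G` containing `v`. -/
noncomputable def triAt {V : Type*} [Fintype V] (G : SimpleGraph V) (v : V) :
    Finset (Finset V) := by
  classical exact (G.cliqueFinset 3).filter (fun t => v ∈ t)

/-- `e(v)` is the number of triangles of `G` containing `v`. -/
lemma nbhdEdgeCount_eq_triAt_card {V : Type*} [Fintype V] (G : SimpleGraph V) (v : V) :
    nbhdEdgeCount G v = (triAt G v).card := by
  classical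
  have hsym : ∀ a b : G.neighborSet v, ({v, a.1, b.1} : Finset V) = {v, b.1, a.1} := by
    intro a b
    rw [Finset.pair_comm a.1 b.1]
  let f' : Sym2 (G.neighborSet v) → Finset V := Sym2.lift ⟨fun a b => {v, a.1, b.1}, hsym⟩
  have hmem : ∀ e : (SimpleGraph.induce (G.neighborSet v) G).edgeSet, f' e.1 ∈ triAt G v := by
    rintro ⟨e, he⟩
    induction e with
    | h a b =>
      rw [SimpleGraph.mem_edgeSet] at he
      have hab : G.Adj a.1 b.1 := he
      have ha : G.Adj v a.1 := a.2
      have hb : G.Adj v b.1 := b.2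
      simp only [triAt, Finset.mem_filter, SimpleGraph.mem_cliqueFinset_iff]
      constructor
      · exact SimpleGraph.is3Clique_triple_iff.2 ⟨ha, hb, hab⟩
      · simp [f']
  let f : (SimpleGraph.induce (G.neighborSet v) G).edgeSet → {t // t ∈ triAt G v} :=
    fun e => ⟨f' e.1, hmem e⟩
  have hvne : ∀ a : G.neighborSet v, a.1 ≠ v := fun a => fun h => (G.ne_of_adj a.2) h.symm
  have hpair : ∀ a b : G.neighborSet v, ({v, a.1, b.1} : Finset V).erase v = {a.1, b.1} := by
    intro a b
    apply Finset.erase_insert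
    simp only [Finset.mem_insert, Finset.mem_singleton]
    push_neg
    exact ⟨fun h => hvne a h.symm, fun h => hvne b h.symm⟩
  have hinj : Function.Injective f := by
    rintro ⟨e1, he1⟩ ⟨e2, he2⟩ h
    simp only [f, Subtype.mk.injEq] at h ⊢
    induction e1 with
    | h a b =>
      induction e2 with
      | h c d =>
        simp only [f', Sym2.lift_mk] at h
        have h2 : ({a.1, b.1} : Finset V) = {c.1, d.1} := by
          rw [← hpair a b, ← hpair c d, h]
        rw [Sym2.eq_iff]
        rcases finset_pair_eq h2 with ⟨h1, h2'⟩ | ⟨h1, h2'⟩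
        · exact Or.inl ⟨Subtype.ext h1, Subtype.ext h2'⟩
        · exact Or.inr ⟨Subtype.ext h1, Subtype.ext h2'⟩
  have hsurj : Function.Surjective f := by
    rintro ⟨t, ht⟩
    simp only [triAt, Finset.mem_filter, SimpleGraph.mem_cliqueFinset_iff] at ht
    obtain ⟨hcl, hv⟩ := ht
    obtain ⟨a, b, c, hab, hac, hbc, rfl⟩ := SimpleGraph.is3Clique_iff.1 hcl
    simp only [Finset.mem_insert, Finset.mem_singleton] at hv
    rcases hv with rfl | rfl | rfl
    · refine ⟨⟨s(⟨b, hab⟩, ⟨c, hac⟩), ?_⟩, ?_⟩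
      · exact hbc
      · simp only [f, f', Sym2.lift_mk]
    · refine ⟨⟨s(⟨a, hab.symm⟩, ⟨c, hbc⟩), ?_⟩, ?_⟩
      · exact hac
      · simp only [f, f', Sym2.lift_mk, Subtype.mk.injEq]
        exact Finset.insert_comm _ _ _
    · refine ⟨⟨s(⟨a, hac.symm⟩, ⟨b, hbc.symm⟩), ?_⟩, ?_⟩
      · exact hab
      · simp only [f, f', Sym2.lift_mk, Subtype.mk.injEq]
        ext x; simp; tauto
  have := Nat.card_congr (Equiv.ofBijective f ⟨hinj, hsurj⟩)
  rw [nbhdEdgeCount, this]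
  simp [Nat.card_eq_fintype_card]

/-- If `G` is an `(r,c)`-constant graph on `n` vertices with `n ≡ 1, 2 (mod 3)`,
then `c ≡ 0 (mod 3)`. -/
theorem c_mod_three_of_card_mod_three {V : Type*} [Fintype V] (G : SimpleGraph V) (r c : ℕ)
    (hreg : ∀ v : V, Nat.card (G.neighborSet v) = r)
    (hconst : ∀ v : V, nbhdEdgeCount G v = c)
    (hn : Fintype.card V % 3 = 1 ∨ Fintype.card V % 3 = 2) :
    c % 3 = 0 := by
  classical
  have hsum : Fintype.card V * c = 3 * (G.cliqueFinset 3).card := by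
    calc Fintype.card V * c = ∑ v : V, c := by
          rw [Finset.sum_const, smul_eq_mul, Finset.card_univ]
    _ = ∑ v : V, (triAt G v).card := by
        refine Finset.sum_congr rfl fun v _ => ?_
        rw [← hconst v, nbhdEdgeCount_eq_triAt_card]
    _ = ∑ v : V, ∑ t ∈ G.cliqueFinset 3, if v ∈ t then 1 else 0 := by
        refine Finset.sum_congr rfl fun v _ => ?_
        rw [triAt, Finset.card_filter]
    _ = ∑ t ∈ G.cliqueFinset 3, ∑ v : V, if v ∈ t then 1 else 0 := Finset.sum_comm
    _ = ∑ t ∈ G.cliqueFinset 3, t.card := by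
        refine Finset.sum_congr rfl fun t _ => ?_
        rw [← Finset.card_filter, Finset.filter_univ_mem]
    _ = ∑ t ∈ G.cliqueFinset 3, 3 := by
        refine Finset.sum_congr rfl fun t ht => ?_
        exact (SimpleGraph.mem_cliqueFinset_iff.1 ht).card_eq
    _ = 3 * (G.cliqueFinset 3).card := by rw [Finset.sum_const, smul_eq_mul, mul_comm]
  have h3 : (3 : ℕ) ∣ Fintype.card V * c := ⟨_, hsum⟩
  rcases (Nat.Prime.dvd_mul Nat.prime_three).1 h3 with h | h
  · obtain ⟨k, hk⟩ := h; omega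
  · obtain ⟨k, hk⟩ := h; omega
end

section
/- Let n ≥ 1 and let S ⊆ {1, …, ⌊n/2⌋} be a jump set, viewed inside Z_n. Then every edge {a, b} of the subgraph of Circ(n, S) induced by the open neighbourhood of the vertex 0 has a unique canonical representation: there exist unique x ∈ S ∪ (−S) and y ∈ S with {a, b} = {x, x + y}, subject to the additional requirement that x ∈ S whenever y = −y in Z_n. -/
/-!
With `d = b - a` the only candidates are `(a, d)` and `(b, -d)`. Since every jump has value in
`[1, n/2]`, both `d` and `-d` lie in `S` only when `d = -d` has value `n/2`, and adding such an
involution to a jump of `S` leaves `S`. So if `d ≠ -d` exactly one candidate is admissible; if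
`d = -d` the side condition asks for the base point in `S`, and neither `a, a + d = b` nor
`-a, -a + d = -b` can both lie in `S`.
-/

/-- The circulant graph `Circ(n, S)`: vertices are `ZMod n`, and distinct
vertices `x, y` are adjacent iff `x - y ∈ S ∪ (-S)`. -/
def Circulant (n : ℕ) (S : Set (ZMod n)) : SimpleGraph (ZMod n) where
  Adj x y := x ≠ y ∧ x - y ∈ S ∪ -S
  symm := by
    constructor
    rintro x y ⟨hxy, h⟩
    refine ⟨hxy.symm, ?_⟩
    have hyx : y - x = -(x - y) := by ring
    rw [hyx]
    rcases h with h | h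
    · exact Or.inr (Set.neg_mem_neg.mpr h)
    · exact Or.inl (Set.mem_neg.mp h)
  loopless := ⟨fun x h => h.1 rfl⟩

namespace ZMod

variable {n : ℕ} {S : Set (ZMod n)}

theorem val_neg_add_val_of_mem (hS : ∀ s ∈ S, 1 ≤ s.val ∧ s.val ≤ n / 2) {x : ZMod n}
    (hx : x ∈ S) : (-x).val + x.val = n := by
  have hx1 := hS x hx
  have : NeZero n := ⟨by omega⟩
  have hx0 : x ≠ 0 := by rintro rfl; simp at hx1
  rw [neg_val, if_neg hx0]
  have := x.val_lt
  omega

theorem eq_neg_of_mem_of_neg_mem (hS : ∀ s ∈ S, 1 ≤ s.val ∧ s.val ≤ n / 2) {x : ZMod n}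
    (hx : x ∈ S) (hnx : -x ∈ S) : x = -x := by
  have hx1 := hS x hx
  have hnx1 := hS (-x) hnx
  have : NeZero n := ⟨by omega⟩
  apply val_injective n
  have := val_neg_add_val_of_mem hS hx
  omega

theorem add_notMem_of_eq_neg (hS : ∀ s ∈ S, 1 ≤ s.val ∧ s.val ≤ n / 2) {x u : ZMod n}
    (hx : x ∈ S) (hxx : x = -x) (hu : u ∈ S) : u + x ∉ S := by
  intro hux
  have : NeZero n := ⟨by have := hS x hx; omega⟩
  have hx2 : 2 * x.val = n := by
    have := val_neg_add_val_of_mem hS hx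
    rw [← hxx] at this
    omega
  have := hS u hu
  have := hS (u + x) hux
  rcases lt_or_ge (u.val + x.val) n with h | h
  · have := val_add_of_lt h
    omega
  · have := val_add_val_of_le h
    omega

end ZMod

section CanonicalRepresentation

variable {G : Type*} [AddCommGroup G] {S : Set G}

theorem Sym2.mk_eq_mk_add_iff {a b x y : G} :
    s(a, b) = s(x, x + y) ↔ (x = a ∧ y = b - a) ∨ (x = b ∧ y = a - b) := by
  rw [Sym2.eq_iff]
  constructor
  · rintro (⟨rfl, rfl⟩ | ⟨rfl, rfl⟩) <;> simp
  · rintro (⟨rfl, rfl⟩ | ⟨rfl, rfl⟩) <;> simp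

def IsCanonicalJump (S : Set G) (x y : G) : Prop :=
  y ∈ S ∧ (y = -y → x ∈ S)

theorem not_isCanonicalJump_and_isCanonicalJump
    (hneg : ∀ x ∈ S, -x ∈ S → x = -x) (hinv : ∀ x ∈ S, x = -x → ∀ u ∈ S, u + x ∉ S)
    (a b : G) : ¬(IsCanonicalJump S a (b - a) ∧ IsCanonicalJump S b (a - b)) := by
  rintro ⟨⟨hd, ha⟩, hnd, hb⟩
  have hdd : b - a = -(b - a) := hneg _ hd (by rwa [neg_sub])
  refine hinv _ hd hdd a (ha hdd) ?_
  rw [add_sub_cancel]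
  exact hb (by rw [← neg_sub, neg_neg]; exact hdd.symm)

theorem isCanonicalJump_or_isCanonicalJump (hinv : ∀ x ∈ S, x = -x → ∀ u ∈ S, u + x ∉ S)
    {a b : G} (ha : a ∈ S ∪ -S) (hb : b ∈ S ∪ -S) (hd : a - b ∈ S ∪ -S) :
    IsCanonicalJump S a (b - a) ∨ IsCanonicalJump S b (a - b) := by
  have hd' : b - a ∈ S ∨ a - b ∈ S := by
    rw [Set.mem_union, Set.mem_neg, neg_sub] at hd
    exact hd.symm
  by_cases hdd : b - a = -(b - a)
  · have hdS : b - a ∈ S := hd'.elim id fun h ↦ by rwa [hdd, neg_sub]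
    by_cases haS : a ∈ S
    · exact Or.inl ⟨hdS, fun _ ↦ haS⟩
    by_cases hbS : b ∈ S
    · exact Or.inr ⟨by rwa [← neg_sub, ← hdd], fun _ ↦ hbS⟩
    have hna : -a ∈ S := Or.resolve_left ha haS
    have hnb : -b ∈ S := Or.resolve_left hb hbS
    refine absurd ?_ (hinv _ hdS hdd _ hna)
    rwa [show -a + (b - a) = -b by rw [hdd]; abel]
  · rcases hd' with h | h
    · exact Or.inl ⟨h, fun e ↦ absurd e hdd⟩
    · exact Or.inr ⟨h, fun e ↦ absurd (by rw [← neg_sub a b, neg_neg]; exact e.symm) hdd⟩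

theorem existsUnique_canonical_of_isCanonicalJump
    (hneg : ∀ x ∈ S, -x ∈ S → x = -x) (hinv : ∀ x ∈ S, x = -x → ∀ u ∈ S, u + x ∉ S)
    {a b : G} (ha : a ∈ S ∪ -S) (h : IsCanonicalJump S a (b - a)) :
    ∃! p : G × G, p.1 ∈ S ∪ -S ∧ p.2 ∈ S ∧ s(a, b) = s(p.1, p.1 + p.2) ∧
      (p.2 = -p.2 → p.1 ∈ S) := by
  refine ⟨(a, b - a), ⟨ha, h.1, by rw [add_sub_cancel], h.2⟩, ?_⟩
  rintro p ⟨-, hy, he, hc⟩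
  rcases Sym2.mk_eq_mk_add_iff.1 he with ⟨h1, h2⟩ | ⟨h1, h2⟩
  · exact Prod.ext h1 h2
  · rw [h1, h2] at hc
    rw [h2] at hy
    exact absurd ⟨h, hy, hc⟩ (not_isCanonicalJump_and_isCanonicalJump hneg hinv a b)

end CanonicalRepresentation

theorem unique_canonical_representation_general (n : ℕ) (S : Set (ZMod n))
    (hS : ∀ s ∈ S, 1 ≤ s.val ∧ s.val ≤ n / 2)
    (a b : ZMod n) (ha : a ∈ S ∪ -S) (hb : b ∈ S ∪ -S)
    (hadj : (Circulant n S).Adj a b) :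
    ∃! p : ZMod n × ZMod n,
      p.1 ∈ S ∪ -S ∧ p.2 ∈ S ∧ s(a, b) = s(p.1, p.1 + p.2) ∧
        (p.2 = -p.2 → p.1 ∈ S) := by
  have hneg : ∀ x ∈ S, -x ∈ S → x = -x := fun _ hx hnx ↦ ZMod.eq_neg_of_mem_of_neg_mem hS hx hnx
  have hinv : ∀ x ∈ S, x = -x → ∀ u ∈ S, u + x ∉ S :=
    fun _ hx hxx _ hu ↦ ZMod.add_notMem_of_eq_neg hS hx hxx hu
  rcases isCanonicalJump_or_isCanonicalJump hinv ha hb hadj.2 with h | h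
  · exact existsUnique_canonical_of_isCanonicalJump hneg hinv ha h
  · rw [Sym2.eq_swap (a := a)]
    exact existsUnique_canonical_of_isCanonicalJump hneg hinv hb h

/-- Every edge `{a, b}` of the subgraph of `Circ(n, S)` induced by the open
neighbourhood `S ∪ (-S)` of the vertex `0` has a unique canonical
representation `{x, x + y}` with `x ∈ S ∪ (-S)`, `y ∈ S`, and `x ∈ S`
whenever `y` is an involution (`y = -y`). -/
theorem unique_canonical_representation (n : ℕ) (hn : 1 ≤ n) (S : Set (ZMod n))
    (hS : ∀ s ∈ S, 1 ≤ s.val ∧ s.val ≤ n / 2)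
    (a b : ZMod n) (ha : a ∈ S ∪ -S) (hb : b ∈ S ∪ -S)
    (hadj : (Circulant n S).Adj a b) :
    ∃! p : ZMod n × ZMod n,
      p.1 ∈ S ∪ -S ∧ p.2 ∈ S ∧ s(a, b) = s(p.1, p.1 + p.2) ∧
        (p.2 = -p.2 → p.1 ∈ S) :=
  unique_canonical_representation_general n S hS a b ha hb hadj
end

section
/- Let n ≥ 1 and let S ⊆ {1, …, ⌊n/2⌋} be a jump set in Z_n. For any vertex v of Circ(n, S): if n is divisible by 3 and n/3 ∈ S, then e(v) ≡ 1 (mod 3); otherwise e(v) ≡ 0 (mod 3). -/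
section TranslationInvariant

variable {A : Type*} [AddCommGroup A]

def zeroSumTriples (T : Set A) : Set (A × A × A) :=
  {t | t.1 ∈ T ∧ t.2.1 ∈ T ∧ t.2.2 ∈ T ∧ t.1 + t.2.1 + t.2.2 = 0}

lemma eq_neg_sub_of_mem_zeroSumTriples {T : Set A} {t : A × A × A} (ht : t ∈ zeroSumTriples T) :
    t.2.2 = -t.1 - t.2.1 := by
  rw [eq_neg_of_add_eq_zero_right ht.2.2.2, neg_add']

def dartEquivZeroSumTriples {G : SimpleGraph A} {T : Set A} (hG : ∀ x y, G.Adj x y ↔ x - y ∈ T)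
    (v : A) : (G.induce (G.neighborSet v)).Dart ≃ zeroSumTriples T where
  toFun d := ⟨(v - d.fst, d.fst - d.snd, d.snd - v),
    (hG _ _).1 d.fst.2, (hG _ _).1 d.adj, (hG _ _).1 (G.adj_symm d.snd.2), by
      simp only [sub_add_sub_cancel, sub_self]⟩
  invFun t :=
    { toProd := (⟨v - t.1.1, (hG _ _).2 (by simpa using t.2.1)⟩,
        ⟨v - t.1.1 - t.1.2.1, G.adj_symm <| (hG _ _).2 <| by
          convert t.2.2.2.1 using 1
          rw [eq_neg_sub_of_mem_zeroSumTriples t.2]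
          abel⟩)
      adj := (hG _ _).2 (by simpa using t.2.2.1) }
  left_inv d := by ext <;> simp
  right_inv t := by
    ext
    · simp
    · simp
    · simp [eq_neg_sub_of_mem_zeroSumTriples t.2]
      abel

theorem two_mul_nbhdEdgeCount_eq_ncard_zeroSumTriples [Finite A] {G : SimpleGraph A} {T : Set A}
    (hG : ∀ x y, G.Adj x y ↔ x - y ∈ T) (v : A) :
    2 * nbhdEdgeCount G v = (zeroSumTriples T).ncard := by
  classical
  have := Fintype.ofFinite A
  rw [nbhdEdgeCount, Nat.card_eq_fintype_card, ← SimpleGraph.edgeFinset_card,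
    ← SimpleGraph.dart_card_eq_twice_card_edges, ← Nat.card_eq_fintype_card,
    Nat.card_congr (dartEquivZeroSumTriples hG v), Nat.card_coe_set_eq]

def rotateZeroSumTriples (T : Set A) : Function.End (zeroSumTriples T) :=
  fun t => ⟨(t.1.2.1, t.1.2.2, t.1.1), t.2.2.1, t.2.2.2.1, t.2.1, by
    rw [← t.2.2.2.2]; abel⟩

lemma rotateZeroSumTriples_pow_three (T : Set A) : rotateZeroSumTriples T ^ 3 = 1 := rfl

lemma isFixedPt_rotateZeroSumTriples_iff {T : Set A} {t : zeroSumTriples T} :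
    Function.IsFixedPt (rotateZeroSumTriples T) t ↔ t.1 = (t.1.1, t.1.1, t.1.1) := by
  obtain ⟨⟨a, b, c⟩, ht⟩ := t
  simp only [Function.IsFixedPt, rotateZeroSumTriples, Subtype.ext_iff, Prod.ext_iff]
  grind

def fixedPointsRotateEquiv (T : Set A) :
    Function.fixedPoints (rotateZeroSumTriples T) ≃ {a | a ∈ T ∧ 3 • a = 0} where
  toFun t := ⟨t.1.1.1, t.1.2.1, by
    have h := isFixedPt_rotateZeroSumTriples_iff.1 t.2
    have := t.1.2.2.2.2
    rw [h] at this
    simpa [three_nsmul, add_assoc] using this⟩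
  invFun a := ⟨⟨(a.1, a.1, a.1), a.2.1, a.2.1, a.2.1, by
    simpa [three_nsmul, add_assoc] using a.2.2⟩, rfl⟩
  left_inv t := Subtype.ext <| Subtype.ext (isFixedPt_rotateZeroSumTriples_iff.1 t.2).symm
  right_inv a := rfl

theorem ncard_zeroSumTriples_modEq [Finite A] (T : Set A) :
    (zeroSumTriples T).ncard ≡ {a | a ∈ T ∧ 3 • a = 0}.ncard [MOD 3] := by
  classical
  have := Fintype.ofFinite A
  have := Equiv.Perm.card_fixedPoints_modEq (p := 3) (n := 1) (rotateZeroSumTriples_pow_three T)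
  simp only [Fintype.card_eq_nat_card] at this
  rwa [Nat.card_coe_set_eq, Nat.card_congr (fixedPointsRotateEquiv T), Nat.card_coe_set_eq] at this

end TranslationInvariant

namespace ZMod

variable {n : ℕ}

lemma eq_zero_of_three_mul_eq_zero (hn : ¬ 3 ∣ n) {a : ZMod n} (ha : 3 * a = 0) : a = 0 := by
  have h3 : IsUnit (3 : ZMod n) := by
    exact_mod_cast (isUnit_iff_coprime 3 n).2 (Nat.prime_three.coprime_iff_not_dvd.2 hn)
  exact h3.mul_right_eq_zero.1 ha

lemma three_mul_natCast_div_three (hn : 3 ∣ n) : 3 * ((n / 3 : ℕ) : ZMod n) = 0 := by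
  have : ((3 * (n / 3) : ℕ) : ZMod n) = 0 := by rw [Nat.mul_div_cancel' hn, natCast_self]
  exact_mod_cast this

lemma val_natCast_div_three [NeZero n] : ((n / 3 : ℕ) : ZMod n).val = n / 3 :=
  val_cast_of_lt (Nat.div_lt_self (Nat.pos_of_neZero n) (by norm_num))

lemma val_neg_natCast_div_three [NeZero n] (hn : 3 ∣ n) :
    (-((n / 3 : ℕ) : ZMod n)).val = 2 * (n / 3) := by
  have hn0 := NeZero.ne n
  rw [neg_val, if_neg, val_natCast_div_three]
  · omega
  · rw [← val_eq_zero, val_natCast_div_three]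
    omega

lemma three_mul_eq_zero_iff [NeZero n] (hn : 3 ∣ n) {a : ZMod n} :
    3 * a = 0 ↔ a = 0 ∨ a = (n / 3 : ℕ) ∨ a = -(n / 3 : ℕ) := by
  refine ⟨fun ha => ?_, ?_⟩
  · obtain ⟨c, hc⟩ : n ∣ 3 * a.val := by
      rw [← natCast_eq_zero_iff]
      push_cast
      rwa [natCast_zmod_val]
    have hlt := a.val_lt
    have hc3 : c < 3 := by nlinarith
    simp only [← val_injective n |>.eq_iff, val_zero, val_natCast_div_three,
      val_neg_natCast_div_three hn]
    interval_cases c <;> omega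
  · rintro (rfl | rfl | rfl)
    · exact mul_zero 3
    · exact three_mul_natCast_div_three hn
    · rw [mul_neg, three_mul_natCast_div_three hn, neg_zero]

end ZMod

section Circulant

variable {n : ℕ} {S : Set (ZMod n)}

lemma circulant_adj_iff (hS : 0 ∉ S) (x y : ZMod n) :
    (Circulant n S).Adj x y ↔ x - y ∈ S ∪ -S := by
  refine ⟨And.right, fun h => ⟨fun hxy => ?_, h⟩⟩
  rw [hxy, sub_self, Set.mem_union, Set.mem_neg, neg_zero, or_self] at h
  exact hS h

lemma zero_notMem_of_one_le_val (hS : ∀ s ∈ S, 1 ≤ s.val) : (0 : ZMod n) ∉ S :=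
  fun h => by simpa using hS 0 h

lemma neg_natCast_div_three_notMem_of_val_le_half [NeZero n] (hS : ∀ s ∈ S, s.val ≤ n / 2)
    (h3 : 3 ∣ n) : -((n / 3 : ℕ) : ZMod n) ∉ S := fun hk => by
  have := hS _ hk
  rw [ZMod.val_neg_natCast_div_three h3] at this
  have := NeZero.ne n
  omega

lemma mem_union_neg_and_three_nsmul_eq_zero_iff [NeZero n]
    (hS : ∀ s ∈ S, 1 ≤ s.val ∧ s.val ≤ n / 2) {a : ZMod n} :
    a ∈ S ∪ -S ∧ 3 • a = 0 ↔
      3 ∣ n ∧ ((n / 3 : ℕ) : ZMod n) ∈ S ∧ (a = (n / 3 : ℕ) ∨ a = -(n / 3 : ℕ)) := by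
  have h0 := zero_notMem_of_one_le_val fun s hs => (hS s hs).1
  have hneg := neg_natCast_div_three_notMem_of_val_le_half fun s hs => (hS s hs).2
  rw [nsmul_eq_mul, Nat.cast_ofNat, Set.mem_union, Set.mem_neg]
  constructor
  · rintro ⟨hT, ha⟩
    by_cases h3 : 3 ∣ n
    · rcases (ZMod.three_mul_eq_zero_iff h3).1 ha with rfl | rfl | rfl
      · simp [h0] at hT
      · exact ⟨h3, hT.resolve_right (hneg h3), .inl rfl⟩
      · exact ⟨h3, by simpa [hneg h3] using hT, .inr rfl⟩
    · simp [ZMod.eq_zero_of_three_mul_eq_zero h3 ha, h0] at hT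
  · rintro ⟨h3, hk, rfl | rfl⟩
    · exact ⟨.inl hk, ZMod.three_mul_natCast_div_three h3⟩
    · refine ⟨.inr (by rwa [neg_neg]), ?_⟩
      rw [mul_neg, ZMod.three_mul_natCast_div_three h3, neg_zero]

lemma ncard_threeTorsion_union_neg_eq_two [NeZero n] (hS : ∀ s ∈ S, 1 ≤ s.val ∧ s.val ≤ n / 2)
    (h3 : 3 ∣ n) (hk : ((n / 3 : ℕ) : ZMod n) ∈ S) :
    {a | a ∈ S ∪ -S ∧ 3 • a = 0}.ncard = 2 := by
  have hne : ((n / 3 : ℕ) : ZMod n) ≠ -(n / 3 : ℕ) := fun h => by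
    have := congrArg ZMod.val h
    rw [ZMod.val_neg_natCast_div_three h3, ZMod.val_natCast_div_three] at this
    have := NeZero.ne n
    omega
  rw [← Set.ncard_pair hne]
  congr 1
  ext a
  simp only [Set.mem_ofPred_eq, mem_union_neg_and_three_nsmul_eq_zero_iff hS, h3, hk, true_and,
    Set.mem_insert_iff, Set.mem_singleton_iff]

lemma ncard_threeTorsion_union_neg_eq_zero [NeZero n]
    (hS : ∀ s ∈ S, 1 ≤ s.val ∧ s.val ≤ n / 2) (h : ¬(3 ∣ n ∧ ((n / 3 : ℕ) : ZMod n) ∈ S)) :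
    {a | a ∈ S ∪ -S ∧ 3 • a = 0}.ncard = 0 := by
  rw [Set.ncard_eq_zero]
  ext a
  simp only [Set.mem_ofPred_eq, mem_union_neg_and_three_nsmul_eq_zero_iff hS,
    Set.mem_empty_iff_false, iff_false]
  tauto

end Circulant

/-- For any vertex `v` of `Circ(n, S)` with `S` a jump set: if `3 ∣ n` and
`n/3 ∈ S`, then `e(v) ≡ 1 (mod 3)`; otherwise `e(v) ≡ 0 (mod 3)`. -/
theorem circulant_nbhdEdgeCount_mod_three (n : ℕ) (hn : 1 ≤ n) (S : Set (ZMod n))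
    (hS : ∀ s ∈ S, 1 ≤ s.val ∧ s.val ≤ n / 2) (v : ZMod n) :
    (3 ∣ n ∧ ((n / 3 : ℕ) : ZMod n) ∈ S → nbhdEdgeCount (Circulant n S) v % 3 = 1) ∧
    (¬(3 ∣ n ∧ ((n / 3 : ℕ) : ZMod n) ∈ S) → nbhdEdgeCount (Circulant n S) v % 3 = 0) := by
  have : NeZero n := ⟨by omega⟩
  have h0 := zero_notMem_of_one_le_val fun s hs => (hS s hs).1
  have hmod := ncard_zeroSumTriples_modEq (S ∪ -S)
  rw [← two_mul_nbhdEdgeCount_eq_ncard_zeroSumTriples (circulant_adj_iff h0) v] at hmod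
  unfold Nat.ModEq at hmod
  constructor
  · rintro ⟨h3, hk⟩
    rw [ncard_threeTorsion_union_neg_eq_two hS h3 hk] at hmod
    omega
  · intro h
    rw [ncard_threeTorsion_union_neg_eq_zero hS h] at hmod
    omega
end

section
/- There exists no (r,c)-circulant with c ≡ 2 (mod 3); that is, for every n ≥ 1, every jump set S ⊆ {1, …, ⌊n/2⌋} in Z_n, and every vertex v of Circ(n, S), the number e(v) of edges induced by the open neighbourhood of v is not congruent to 2 modulo 3. -/
open Function

theorem Set.ncard_modEq_ncard_inter_fixedPoints {α : Type*} {s : Set α} (hs : s.Finite)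
    {f : α → α} (hf : Set.MapsTo f s s) {p n : ℕ} [Fact p.Prime]
    (hfp : ∀ x ∈ s, f^[p ^ n] x = x) :
    s.ncard ≡ (s ∩ fixedPoints f).ncard [MOD p] := by
  classical
  have := hs.fintype
  let g : Function.End s := hf.restrict
  have hg : g ^ p ^ n = 1 := by
    funext x
    show g^[p ^ n] x = x
    exact Subtype.ext (by simp [g, hf.iterate_restrict, hfp x x.2])
  have hfix : Nat.card (fixedPoints g) = (s ∩ fixedPoints f).ncard :=
    Nat.card_congr <| (Equiv.subtypeEquivRight fun x => Subtype.ext_iff).trans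
      (Equiv.subtypeSubtypeEquivSubtypeInter (· ∈ s) fun x => f x = x)
  rw [← hfix, ← Nat.card_coe_set_eq, Nat.card_eq_fintype_card, Nat.card_eq_fintype_card]
  exact Equiv.Perm.card_fixedPoints_modEq hg

theorem IsAddCyclic.ncard_nsmul_eq_zero_le {A : Type*} [AddGroup A] [Finite A]
    [IsAddCyclic A] {k : ℕ} (hk : 0 < k) : {a : A | k • a = 0}.ncard ≤ k := by
  classical
  have := Fintype.ofFinite A
  simpa [Set.ncard_eq_toFinset_card'] using IsAddCyclic.card_nsmul_eq_zero_le (α := A) hk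

namespace SimpleGraph

section

variable {V : Type*} (G : SimpleGraph V)

def nbhdDarts (v : V) : Set (V × V) :=
  {p | G.Adj v p.1 ∧ G.Adj v p.2 ∧ G.Adj p.1 p.2}

def dartEquivNbhdDarts (v : V) :
    (G.induce (G.neighborSet v)).Dart ≃ G.nbhdDarts v where
  toFun d := ⟨(d.fst, d.snd), d.fst.2, d.snd.2, d.adj⟩
  invFun p := ⟨(⟨p.1.1, p.2.1⟩, ⟨p.1.2, p.2.2.1⟩), p.2.2.2⟩

theorem ncard_nbhdDarts [Finite V] (v : V) :
    (G.nbhdDarts v).ncard = 2 * nbhdEdgeCount G v := by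
  classical
  have := Fintype.ofFinite V
  rw [← Nat.card_coe_set_eq, ← Nat.card_congr (G.dartEquivNbhdDarts v), nbhdEdgeCount,
    Nat.card_eq_fintype_card, dart_card_eq_twice_card_edges, edgeFinset_card,
    Nat.card_eq_fintype_card]

theorem swap_mem_nbhdDarts {G : SimpleGraph V} {v : V} {p : V × V}
    (hp : p ∈ G.nbhdDarts v) : p.swap ∈ G.nbhdDarts v :=
  ⟨hp.2.1, hp.1, hp.2.2.symm⟩

end

variable {A : Type*} [AddCommGroup A] {G : SimpleGraph A}

def nbhdDartRotate (v : A) (p : A × A) : A × A := (p.2 + (v - p.1), v + (v - p.1))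

theorem nbhdDartRotate_iterate_three (v : A) (p : A × A) : (nbhdDartRotate v)^[3] p = p := by
  obtain ⟨x, y⟩ := p
  simp only [iterate_succ, iterate_zero, comp_apply, id, nbhdDartRotate, Prod.mk.injEq]
  constructor <;> abel

theorem mem_fixedPoints_nbhdDartRotate {v : A} {p : A × A} :
    p ∈ fixedPoints (nbhdDartRotate v) ↔ 3 • (p.1 - v) = 0 ∧ p.2 = v - (p.1 - v) := by
  obtain ⟨x, y⟩ := p
  simp only [mem_fixedPoints, IsFixedPt, nbhdDartRotate, Prod.mk.injEq]
  constructor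
  · rintro ⟨h1, rfl⟩
    refine ⟨?_, by abel⟩
    calc 3 • (x - v) = x - (v + (v - x) + (v - x)) := by abel
      _ = 0 := by rw [h1, sub_self]
  · rintro ⟨h1, rfl⟩
    refine ⟨(eq_of_sub_eq_zero ?_).symm, by abel⟩
    rw [← h1]
    abel

theorem swap_mem_fixedPoints_nbhdDartRotate {v : A} {p : A × A}
    (hp : p ∈ fixedPoints (nbhdDartRotate v)) : p.swap ∈ fixedPoints (nbhdDartRotate v) := by
  obtain ⟨h3, h2⟩ := mem_fixedPoints_nbhdDartRotate.mp hp
  refine mem_fixedPoints_nbhdDartRotate.mpr ⟨?_, ?_⟩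
  · rw [Prod.fst_swap, h2, sub_sub_cancel_left, smul_neg, h3, neg_zero]
  · rw [Prod.snd_swap, Prod.fst_swap, h2]
    abel

theorem mapsTo_nbhdDartRotate (hG : ∀ x y t, G.Adj x y → G.Adj (x + t) (y + t)) (v : A) :
    Set.MapsTo (nbhdDartRotate v) (G.nbhdDarts v) (G.nbhdDarts v) := by
  rintro ⟨x, y⟩ ⟨hvx, hvy, hxy⟩
  have h := hG x y (v - x) hxy
  have h' := hG x v (v - x) hvx.symm
  simp only [add_sub_cancel] at h h'
  exact ⟨h, h', hG y v (v - x) hvy.symm⟩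

theorem ncard_nbhdDarts_inter_fixedPoints_le [Finite A] [IsAddCyclic A] (v : A) :
    (G.nbhdDarts v ∩ fixedPoints (nbhdDartRotate v)).ncard ≤ 2 := by
  have hmaps : ∀ p ∈ G.nbhdDarts v ∩ fixedPoints (nbhdDartRotate v),
      p.1 - v ∈ {a : A | 3 • a = 0} \ {0} := fun p hp =>
    ⟨(mem_fixedPoints_nbhdDartRotate.mp hp.2).1, sub_ne_zero.mpr hp.1.1.ne'⟩
  have hinj : Set.InjOn (fun p : A × A => p.1 - v)
      (G.nbhdDarts v ∩ fixedPoints (nbhdDartRotate v)) := by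
    intro p hp q hq hpq
    have h1 : p.1 = q.1 := sub_left_inj.mp hpq
    refine Prod.ext h1 ?_
    rw [(mem_fixedPoints_nbhdDartRotate.mp hp.2).2, (mem_fixedPoints_nbhdDartRotate.mp hq.2).2,
      h1]
  calc _ ≤ ({a : A | 3 • a = 0} \ {0}).ncard :=
        Set.ncard_le_ncard_of_injOn _ hmaps hinj (Set.toFinite _)
    _ = {a : A | 3 • a = 0}.ncard - 1 := Set.ncard_sdiff_singleton_of_mem (by simp)
    _ ≤ 2 := by
      have := IsAddCyclic.ncard_nsmul_eq_zero_le (A := A) three_pos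
      omega

theorem nbhdEdgeCount_mod_three_ne_two [Finite A] [IsAddCyclic A]
    (hG : ∀ x y t, G.Adj x y → G.Adj (x + t) (y + t)) (v : A) :
    nbhdEdgeCount G v % 3 ≠ 2 := by
  set F := G.nbhdDarts v ∩ fixedPoints (nbhdDartRotate v)
  have hmod3 : 2 * nbhdEdgeCount G v ≡ F.ncard [MOD 3] := by
    rw [← ncard_nbhdDarts]
    exact Set.ncard_modEq_ncard_inter_fixedPoints (p := 3) (n := 1) (Set.toFinite _)
      (mapsTo_nbhdDartRotate hG v) fun p _ => nbhdDartRotate_iterate_three v p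
  have hmod2 : F.ncard ≡ 0 [MOD 2] := by
    have hfree : F ∩ fixedPoints Prod.swap = ∅ :=
      Set.eq_empty_of_forall_notMem fun p hp => hp.1.1.2.2.ne (congrArg Prod.snd hp.2)
    simpa [hfree] using
      Set.ncard_modEq_ncard_inter_fixedPoints (p := 2) (n := 1) (Set.toFinite F)
      (fun p hp => ⟨swap_mem_nbhdDarts hp.1, swap_mem_fixedPoints_nbhdDartRotate hp.2⟩)
      fun p _ => by simp
  have hle : F.ncard ≤ 2 := ncard_nbhdDarts_inter_fixedPoints_le v
  unfold Nat.ModEq at hmod3 hmod2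
  omega

end SimpleGraph

theorem Circulant.adj_add_right {n : ℕ} {S : Set (ZMod n)} {x y : ZMod n} (t : ZMod n)
    (h : (Circulant n S).Adj x y) : (Circulant n S).Adj (x + t) (y + t) :=
  ⟨(add_left_injective t).ne h.1, (add_sub_add_right_eq_sub x y t).symm ▸ h.2⟩

theorem circulant_nbhdEdgeCount_mod_three_ne_two_general (n : ℕ) (hn : 1 ≤ n) (S : Set (ZMod n))
    (v : ZMod n) :
    nbhdEdgeCount (Circulant n S) v % 3 ≠ 2 := by
  have : NeZero n := ⟨by omega⟩
  exact SimpleGraph.nbhdEdgeCount_mod_three_ne_two (fun _ _ t => Circulant.adj_add_right t) v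

/-- No `(r,c)`-circulant exists with `c ≡ 2 (mod 3)`: for every `n ≥ 1`,
every jump set `S ⊆ {1, …, ⌊n/2⌋}` and every vertex `v` of `Circ(n, S)`,
the number `e(v)` is not congruent to `2` modulo `3`. -/
theorem circulant_nbhdEdgeCount_mod_three_ne_two (n : ℕ) (hn : 1 ≤ n) (S : Set (ZMod n))
    (hS : ∀ s ∈ S, 1 ≤ s.val ∧ s.val ≤ n / 2) (v : ZMod n) :
    nbhdEdgeCount (Circulant n S) v % 3 ≠ 2 :=
  circulant_nbhdEdgeCount_mod_three_ne_two_general n hn S v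
end

section
/- Let k, c, r be integers such that k ≥ 1, r ≥ 2k, c ≡ 0 (mod 3), and 3(k−2)(k−1)/2 ≤ c ≤ 3k(k−1)/2. Then there exists an (r,c)-circulant: that is, there exist n ≥ 1 and a set S of nonzero elements of Z_n such that the circulant Circ(n, S) is r-regular and e(v) = c for every vertex v. -/
/-! For a symmetric set `S ⊆ ℤ/n` avoiding `0`, `Circ(n, S)` is vertex-transitive and
`|S|`-regular, and `2 e(v)` is the number of ordered pairs `(a, b) ∈ S²` with `a - b ∈ S`.
Write `c = 3 (C(k-1, 2) + j)` with `0 ≤ j ≤ k - 1`. In `ℤ`, the set `{±1, …, ±(k-1)}` has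
`3 (k-1)(k-2)` such pairs, and adjoining `±t` with `t = 2k - 1 - j` creates exactly `6 j` more.
Adjoining `±u` with `u` more than twice every element present creates none; this pads the set
to `2 ⌊r/2⌋` elements inside some `[-M, M]`. Reducing modulo `n = 4M + 2` creates no new
pairs, and for odd `r` the element `n/2 = -n/2` can be added without creating any either. -/

open Finset SimpleGraph

section SchurTriples

variable {α : Type*} [AddCommGroup α] [DecidableEq α]

def schurTripleCount (A : Finset α) : ℕ := #{p ∈ A ×ˢ A | p.1 - p.2 ∈ A}

def IsConnectionSet (A : Finset α) : Prop := 0 ∉ A ∧ ∀ a ∈ A, -a ∈ A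

lemma schurTripleCount_eq_sum (A : Finset α) :
    schurTripleCount A = ∑ a ∈ A, #{b ∈ A | a - b ∈ A} := by
  rw [schurTripleCount, card_filter, sum_product]
  simp only [card_filter]

lemma card_filter_sub_eq (A : Finset α) (a x : α) :
    #{b ∈ A | a - b = x} = if a - x ∈ A then 1 else 0 := by
  have : {b ∈ A | a - b = x} = {b ∈ A | b = a - x} :=
    filter_congr fun b _ => by rw [sub_eq_iff_eq_add, eq_sub_iff_add_eq, eq_comm, add_comm]
  rw [this, filter_eq']
  split_ifs <;> simp

/-- The new pairs are `(x, b)`, `(a, x)` and `(a, a - x)`; the last two kinds are both counted by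
`a - x ∈ A`. -/
theorem schurTripleCount_insert {A : Finset α} {x : α} (hxA : x ∉ A) (hx0 : x ≠ 0)
    (h0A : (0 : α) ∉ A) (hxx : x + x ∉ A) :
    schurTripleCount (insert x A) =
      schurTripleCount A + #{a ∈ A | x - a ∈ A} + 2 * #{a ∈ A | a - x ∈ A} := by
  have hfirst : #{b ∈ insert x A | x - b ∈ insert x A} = #{a ∈ A | x - a ∈ A} := by
    rw [filter_insert, if_neg (by simpa using ⟨hx0.symm, h0A⟩)]
    congr 1
    refine filter_congr fun b hb => ?_
    simp only [mem_insert, sub_eq_self]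
    exact or_iff_right (ne_of_mem_of_not_mem hb h0A)
  have hrest (a : α) (ha : a ∈ A) : #{b ∈ insert x A | a - b ∈ insert x A} =
      #{b ∈ A | a - b ∈ A} + 2 * (if a - x ∈ A then 1 else 0) := by
    have hax : a - x ∈ insert x A ↔ a - x ∈ A := by
      rw [mem_insert, sub_eq_iff_eq_add]
      exact or_iff_right (ne_of_mem_of_not_mem ha hxx)
    have hsplit : #{b ∈ A | a - b ∈ insert x A} =
        (if a - x ∈ A then 1 else 0) + #{b ∈ A | a - b ∈ A} := by
      simp_rw [mem_insert]
      rw [filter_or, card_union_of_disjoint, card_filter_sub_eq]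
      exact disjoint_filter.2 fun b _ h => h ▸ hxA
    by_cases h : a - x ∈ A
    · rw [filter_insert, if_pos (hax.2 h), card_insert_of_notMem fun h' => hxA (mem_filter.1 h').1,
        hsplit, if_pos h]
      ring
    · rw [filter_insert, if_neg (mt hax.1 h), hsplit, if_neg h]
      ring
  rw [schurTripleCount_eq_sum, sum_insert hxA, hfirst, sum_congr rfl hrest, sum_add_distrib,
    ← mul_sum, ← card_filter, schurTripleCount_eq_sum]
  ring

theorem schurTripleCount_image {β : Type*} [AddCommGroup β] [DecidableEq β] {f : α →+ β}
    {A : Finset α} (hinj : Set.InjOn f A)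
    (hf : ∀ a ∈ A, ∀ b ∈ A, ∀ c ∈ A, f a - f b = f c → a - b = c) :
    schurTripleCount (A.image f) = schurTripleCount A := by
  symm
  refine card_nbij (Prod.map f f) ?_ ?_ ?_
  · rintro ⟨a, b⟩ h
    simp only [coe_filter, mem_product, Set.mem_ofPred_eq] at h
    simp only [Prod.map, coe_filter, mem_product, Set.mem_ofPred_eq, ← map_sub]
    exact ⟨⟨mem_image_of_mem f h.1.1, mem_image_of_mem f h.1.2⟩, mem_image_of_mem f h.2⟩
  · rintro ⟨a, b⟩ h ⟨a', b'⟩ h' he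
    simp only [coe_filter, mem_product, Set.mem_ofPred_eq] at h h'
    simp only [Prod.map, Prod.mk.injEq] at he ⊢
    exact ⟨hinj h.1.1 h'.1.1 he.1, hinj h.1.2 h'.1.2 he.2⟩
  · rintro ⟨x, y⟩ h
    simp only [coe_filter, mem_product, mem_image, Set.mem_ofPred_eq] at h
    obtain ⟨⟨⟨a, ha, rfl⟩, ⟨b, hb, rfl⟩⟩, ⟨c, hc, hfc⟩⟩ := h
    refine ⟨(a, b), ?_, rfl⟩
    simp only [coe_filter, mem_product, Set.mem_ofPred_eq]
    exact ⟨⟨ha, hb⟩, hf a ha b hb c hc hfc.symm ▸ hc⟩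

end SchurTriples

lemma nbhdEdgeCount_map_iso {V W : Type*} {G : SimpleGraph V} {G' : SimpleGraph W} (φ : G ≃g G')
    (v : V) : nbhdEdgeCount G' (φ v) = nbhdEdgeCount G v := by
  have hbij : Set.BijOn φ (G.neighborSet v) (G'.neighborSet (φ v)) :=
    φ.image_neighborSet (v := v) ▸ φ.injective.injOn.bijOn_image
  exact (Nat.card_congr (φ.induce hbij).mapEdgeSet).symm

lemma SimpleGraph.two_mul_card_edgeSet_induce {V : Type*} {G : SimpleGraph V}
    [DecidableRel G.Adj] (s : Finset V) :
    2 * Nat.card (G.induce s).edgeSet = #{p ∈ s ×ˢ s | G.Adj p.1 p.2} := by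
  rw [Nat.card_eq_fintype_card, ← edgeFinset_card, two_mul_card_edgeFinset]
  refine card_nbij (fun p => (p.1.1, p.2.1)) ?_ ?_ ?_
  · rintro ⟨⟨a, ha⟩, ⟨b, hb⟩⟩ h
    simp only [coe_filter, mem_univ, true_and, Set.mem_ofPred_eq, mem_product] at h ⊢
    exact ⟨⟨ha, hb⟩, h⟩
  · rintro ⟨⟨a, ha⟩, ⟨b, hb⟩⟩ - ⟨⟨a', ha'⟩, ⟨b', hb'⟩⟩ - h
    simp_all
  · rintro ⟨a, b⟩ h
    simp only [coe_filter, mem_product, Set.mem_ofPred_eq] at h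
    exact ⟨(⟨a, h.1.1⟩, ⟨b, h.1.2⟩), by simpa using h.2, rfl⟩

namespace Circulant

variable {n : ℕ}

def translate (S : Set (ZMod n)) (v : ZMod n) : Circulant n S ≃g Circulant n S where
  toEquiv := Equiv.addLeft v
  map_rel_iff' := by simp [Circulant]

variable {S : Finset (ZMod n)}

lemma adj_iff (hS : IsConnectionSet S) {x y : ZMod n} :
    (Circulant n S).Adj x y ↔ x ≠ y ∧ x - y ∈ S := by
  have : (S : Set (ZMod n)) ∪ -S = S := Set.union_eq_left.mpr fun s hs => by simpa using hS.2 _ hs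
  simp [Circulant, this]

lemma neighborSet_zero (hS : IsConnectionSet S) : (Circulant n S).neighborSet 0 = S := by
  ext y
  rw [mem_neighborSet, adj_iff hS, zero_sub, mem_coe]
  exact ⟨fun h => by simpa using hS.2 _ h.2, fun h => ⟨fun h0 => hS.1 (h0 ▸ h), hS.2 _ h⟩⟩

theorem card_neighborSet (hS : IsConnectionSet S) (v : ZMod n) :
    Nat.card ((Circulant n S).neighborSet v) = #S := by
  have h := Nat.card_congr ((translate (S : Set (ZMod n)) v).mapNeighborSet 0)
  simp only [translate, RelIso.coe_fn_mk, Equiv.coe_addLeft, add_zero] at h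
  rw [← h, neighborSet_zero hS, Nat.card_coe_set_eq, Set.ncard_coe_finset]

theorem two_mul_nbhdEdgeCount (hS : IsConnectionSet S) (v : ZMod n) :
    2 * nbhdEdgeCount (Circulant n S) v = schurTripleCount S := by
  have h := nbhdEdgeCount_map_iso (translate (S : Set (ZMod n)) v) 0
  simp only [translate, RelIso.coe_fn_mk, Equiv.coe_addLeft, add_zero] at h
  classical
  rw [h, nbhdEdgeCount, neighborSet_zero hS, two_mul_card_edgeSet_induce, schurTripleCount]
  refine congrArg card (filter_congr fun p hp => ?_)
  rw [adj_iff hS]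
  refine and_iff_right_of_imp fun hp' h => hS.1 ?_
  rwa [h, sub_self] at hp'

end Circulant

noncomputable def puncturedInterval (m : ℕ) : Finset ℤ := (Icc (-(m : ℤ)) m).erase 0

lemma mem_puncturedInterval {m : ℕ} {x : ℤ} :
    x ∈ puncturedInterval m ↔ x ≠ 0 ∧ -(m : ℤ) ≤ x ∧ x ≤ m := by
  simp [puncturedInterval]

lemma card_puncturedInterval (m : ℕ) : #(puncturedInterval m) = 2 * m := by
  rw [puncturedInterval, card_erase_of_mem (by simp), Int.card_Icc]
  omega

lemma puncturedInterval_succ (m : ℕ) :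
    puncturedInterval (m + 1) =
      insert (-(m + 1 : ℕ) : ℤ) (insert ((m + 1 : ℕ) : ℤ) (puncturedInterval m)) := by
  ext x
  simp only [mem_puncturedInterval, mem_insert]
  omega

theorem schurTripleCount_insert_pair_puncturedInterval {m t : ℕ} (hmt : m < t)
    (ht : t ≤ 2 * m + 1) :
    schurTripleCount (insert (-t : ℤ) (insert (t : ℤ) (puncturedInterval m))) =
      schurTripleCount (puncturedInterval m) + 6 * (2 * m + 1 - t) := by
  set I := puncturedInterval m
  have hI (x : ℤ) : x ∈ I ↔ x ≠ 0 ∧ -(m : ℤ) ≤ x ∧ x ≤ m := mem_puncturedInterval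
  have hIcc (lo hi : ℤ) (h : hi - lo = 2 * m - t) : #(Icc lo hi) = 2 * m + 1 - t := by
    rw [Int.card_Icc]
    omega
  have h1 : {a ∈ I | (t : ℤ) - a ∈ I} = Icc ((t : ℤ) - m) m := by
    ext a; simp only [mem_filter, hI, mem_Icc]; omega
  have h2 : {a ∈ I | a - (t : ℤ) ∈ I} = Icc ((t : ℤ) - m) m := by
    ext a; simp only [mem_filter, hI, mem_Icc]; omega
  have h3 : {a ∈ insert (t : ℤ) I | -(t : ℤ) - a ∈ insert (t : ℤ) I} =
      Icc (-(m : ℤ)) (m - t) := by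
    ext a; simp only [mem_filter, mem_insert, hI, mem_Icc]; omega
  have h4 : {a ∈ insert (t : ℤ) I | a - -(t : ℤ) ∈ insert (t : ℤ) I} =
      Icc (-(m : ℤ)) (m - t) := by
    ext a; simp only [mem_filter, mem_insert, hI, mem_Icc]; omega
  rw [schurTripleCount_insert, schurTripleCount_insert, h1, h2, h3, h4, hIcc _ _ (by omega),
    hIcc _ _ (by omega)]
  · ring
  all_goals grind

theorem schurTripleCount_puncturedInterval (m : ℕ) :
    schurTripleCount (puncturedInterval m) = 3 * m * (m - 1) := by
  induction m with
  | zero => rfl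
  | succ m ih =>
    rw [puncturedInterval_succ,
      schurTripleCount_insert_pair_puncturedInterval (by omega) (by omega), ih]
    obtain _ | m := m
    · rfl
    rw [show 2 * (m + 1) + 1 - (m + 1 + 1) = m + 1 by omega]
    simp only [Nat.add_sub_cancel]
    ring

theorem schurTripleCount_insert_pair_of_natAbs_le {A : Finset ℤ} {N : ℕ}
    (hA : ∀ a ∈ A, a.natAbs ≤ N) (h0 : (0 : ℤ) ∉ A) {u : ℤ} (hu : 2 * N < u) :
    schurTripleCount (insert (-u) (insert u A)) = schurTripleCount A := by
  rw [schurTripleCount_insert, schurTripleCount_insert, filter_false_of_mem, filter_false_of_mem,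
    filter_false_of_mem, filter_false_of_mem]
  · rfl
  all_goals grind

theorem exists_padding {A : Finset ℤ} {N : ℕ} (hA : IsConnectionSet A)
    (hN : ∀ a ∈ A, a.natAbs ≤ N) (p : ℕ) :
    ∃ (B : Finset ℤ) (M : ℕ), IsConnectionSet B ∧ (∀ b ∈ B, b.natAbs ≤ M) ∧
      #B = #A + 2 * p ∧ schurTripleCount B = schurTripleCount A := by
  induction p with
  | zero => exact ⟨A, N, hA, hN, rfl, rfl⟩
  | succ p ih =>
    obtain ⟨B, M, hB, hM, hcard, hcount⟩ := ih
    have huB : ((2 * M + 1 : ℕ) : ℤ) ∉ B := fun h => by have := hM _ h; omega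
    have hneg : -((2 * M + 1 : ℕ) : ℤ) ∉ insert ((2 * M + 1 : ℕ) : ℤ) B := by
      rw [mem_insert, not_or]
      exact ⟨by omega, fun h => by have := hM _ h; omega⟩
    refine ⟨insert (-((2 * M + 1 : ℕ) : ℤ)) (insert ((2 * M + 1 : ℕ) : ℤ) B), 2 * M + 1,
      ⟨?_, ?_⟩, ?_, ?_, ?_⟩
    · grind [hB.1]
    · grind [hB.2]
    · grind
    · rw [card_insert_of_notMem hneg, card_insert_of_notMem huB, hcard]
      ring
    · rw [schurTripleCount_insert_pair_of_natAbs_le hM hB.1 (by omega), hcount]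

theorem exists_isConnectionSet_int (m j p : ℕ) (hj : j ≤ m) :
    ∃ (A : Finset ℤ) (M : ℕ), IsConnectionSet A ∧ (∀ a ∈ A, a.natAbs ≤ M) ∧
      #A = 2 * m + 2 + 2 * p ∧ schurTripleCount A = 3 * m * (m - 1) + 6 * j := by
  set t := 2 * m + 1 - j
  have htI : (t : ℤ) ∉ puncturedInterval m := by rw [mem_puncturedInterval]; omega
  have hnegt : -(t : ℤ) ∉ insert (t : ℤ) (puncturedInterval m) := by
    rw [mem_insert, mem_puncturedInterval]; omega
  have hA₀ : IsConnectionSet (insert (-(t : ℤ)) (insert (t : ℤ) (puncturedInterval m))) :=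
    ⟨by grind [mem_puncturedInterval], by grind [mem_puncturedInterval]⟩
  have hM₀ : ∀ a ∈ insert (-(t : ℤ)) (insert (t : ℤ) (puncturedInterval m)),
      a.natAbs ≤ 2 * m + 1 := by
    grind [mem_puncturedInterval]
  obtain ⟨A, M, hA, hM, hcard, hcount⟩ := exists_padding hA₀ hM₀ p
  refine ⟨A, M, hA, hM, ?_, ?_⟩
  · rw [hcard, card_insert_of_notMem hnegt, card_insert_of_notMem htI, card_puncturedInterval]
  · rw [hcount, schurTripleCount_insert_pair_puncturedInterval (by omega) (by omega),
      schurTripleCount_puncturedInterval]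
    omega

namespace ZMod

lemma intCast_eq_intCast_iff_of_natAbs_sub_lt {n : ℕ} {a b : ℤ} (h : (a - b).natAbs < n) :
    (a : ZMod n) = b ↔ a = b := by
  refine ⟨fun hab => ?_, congrArg _⟩
  rw [intCast_eq_intCast_iff_dvd_sub] at hab
  have := Int.eq_zero_of_dvd_of_natAbs_lt_natAbs hab (by omega)
  omega

variable {A : Finset ℤ} {M n : ℕ}

lemma injOn_intCast (hM : ∀ a ∈ A, a.natAbs ≤ M) (hn : 2 * M < n) :
    Set.InjOn ((↑) : ℤ → ZMod n) A := fun a ha b hb hab => by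
  have := hM a ha
  have := hM b hb
  exact (intCast_eq_intCast_iff_of_natAbs_sub_lt (by omega)).1 hab

lemma isConnectionSet_image_intCast (hA : IsConnectionSet A) (hM : ∀ a ∈ A, a.natAbs ≤ M)
    (hn : M < n) : IsConnectionSet (A.image ((↑) : ℤ → ZMod n)) := by
  refine ⟨fun h0 => ?_, ?_⟩
  · obtain ⟨a, ha, h⟩ := mem_image.1 h0
    have := hM a ha
    rw [← Int.cast_zero, intCast_eq_intCast_iff_of_natAbs_sub_lt (by omega)] at h
    exact hA.1 (h ▸ ha)
  · simp only [mem_image, forall_exists_index, and_imp, forall_apply_eq_imp_iff₂]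
    exact fun a ha => ⟨-a, hA.2 a ha, Int.cast_neg a⟩

lemma schurTripleCount_image_intCast (hM : ∀ a ∈ A, a.natAbs ≤ M) (hn : 3 * M < n) :
    schurTripleCount (A.image ((↑) : ℤ → ZMod n)) = schurTripleCount A := by
  refine schurTripleCount_image (f := Int.castAddHom (ZMod n)) (injOn_intCast hM (by omega))
    fun a ha b hb c hc h => ?_
  have := hM a ha
  have := hM b hb
  have := hM c hc
  rw [Int.coe_castAddHom, ← Int.cast_sub] at h
  exact (intCast_eq_intCast_iff_of_natAbs_sub_lt (by omega)).1 h

variable {h : ℕ}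

lemma half_add_half : ((h : ℤ) : ZMod (2 * h)) + (h : ℤ) = 0 := by
  rw [← Int.cast_add, show (h : ℤ) + h = ((2 * h : ℕ) : ℤ) by push_cast; ring,
    Int.cast_natCast, natCast_self]

lemma half_ne_zero (hh : 0 < h) : ((h : ℤ) : ZMod (2 * h)) ≠ 0 := by
  rw [← Int.cast_zero, Ne, intCast_eq_intCast_iff_of_natAbs_sub_lt (by omega)]
  omega

lemma half_notMem_image (hM : ∀ a ∈ A, a.natAbs ≤ M) (hh : M < h) :
    ((h : ℤ) : ZMod (2 * h)) ∉ A.image ((↑) : ℤ → ZMod (2 * h)) := by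
  simp only [mem_image, not_exists, not_and]
  intro a ha hah
  have := hM a ha
  have := (intCast_eq_intCast_iff_of_natAbs_sub_lt (by omega)).1 hah
  omega

lemma half_sub_notMem_image (hM : ∀ a ∈ A, a.natAbs ≤ M) (hh : 2 * M < h) {x : ZMod (2 * h)}
    (hx : x ∈ A.image ((↑) : ℤ → ZMod (2 * h))) :
    (h : ℤ) - x ∉ A.image ((↑) : ℤ → ZMod (2 * h)) ∧
      x - (h : ℤ) ∉ A.image ((↑) : ℤ → ZMod (2 * h)) := by
  obtain ⟨a, ha, rfl⟩ := mem_image.1 hx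
  simp only [mem_image, not_exists, not_and, ← Int.cast_sub]
  have := hM a ha
  refine ⟨fun b hb hab => ?_, fun b hb hab => ?_⟩ <;>
  · have := hM b hb
    have := (intCast_eq_intCast_iff_of_natAbs_sub_lt (by omega)).1 hab
    omega

lemma isConnectionSet_insert_half (hA : IsConnectionSet A) (hM : ∀ a ∈ A, a.natAbs ≤ M)
    (hh : M < h) :
    IsConnectionSet
      (insert ((h : ℤ) : ZMod (2 * h)) (A.image ((↑) : ℤ → ZMod (2 * h)))) := by
  have hS := isConnectionSet_image_intCast hA hM (n := 2 * h) (by omega)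
  refine ⟨?_, fun x hx => ?_⟩
  · rw [mem_insert, not_or]
    exact ⟨(half_ne_zero (by omega)).symm, hS.1⟩
  · rcases mem_insert.1 hx with rfl | hx
    · rw [neg_eq_of_add_eq_zero_left half_add_half]
      exact mem_insert_self _ _
    · exact mem_insert_of_mem (hS.2 x hx)

lemma card_insert_half (hM : ∀ a ∈ A, a.natAbs ≤ M) (hh : M < h) :
    #(insert ((h : ℤ) : ZMod (2 * h)) (A.image ((↑) : ℤ → ZMod (2 * h)))) = #A + 1 := by
  rw [card_insert_of_notMem (half_notMem_image hM hh),
    card_image_of_injOn (injOn_intCast hM (by omega))]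

lemma schurTripleCount_insert_half (hA : IsConnectionSet A) (hM : ∀ a ∈ A, a.natAbs ≤ M)
    (hh : 2 * M < h) :
    schurTripleCount (insert ((h : ℤ) : ZMod (2 * h)) (A.image ((↑) : ℤ → ZMod (2 * h)))) =
      schurTripleCount A := by
  have h0 := (isConnectionSet_image_intCast hA hM (n := 2 * h) (by omega)).1
  rw [schurTripleCount_insert (half_notMem_image hM (by omega)) (half_ne_zero (by omega)) h0
      (half_add_half ▸ h0),
    filter_false_of_mem fun x hx => (half_sub_notMem_image hM hh hx).1,
    filter_false_of_mem fun x hx => (half_sub_notMem_image hM hh hx).2,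
    schurTripleCount_image_intCast hM (by omega)]
  rfl

end ZMod

theorem exists_isConnectionSet_zmod {A : Finset ℤ} {M : ℕ} (hA : IsConnectionSet A)
    (hM : ∀ a ∈ A, a.natAbs ≤ M) {e : ℕ} (he : e ≤ 1) :
    ∃ n : ℕ, 1 ≤ n ∧ ∃ S : Finset (ZMod n), IsConnectionSet S ∧ #S = #A + e ∧
      schurTripleCount S = schurTripleCount A := by
  refine ⟨2 * (2 * M + 1), by omega, ?_⟩
  obtain rfl | rfl : e = 0 ∨ e = 1 := by omega
  · exact ⟨_, ZMod.isConnectionSet_image_intCast hA hM (by omega),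
      card_image_of_injOn (ZMod.injOn_intCast hM (by omega)),
      ZMod.schurTripleCount_image_intCast hM (by omega)⟩
  · exact ⟨_, ZMod.isConnectionSet_insert_half hA hM (by omega),
      ZMod.card_insert_half hM (by omega), ZMod.schurTripleCount_insert_half hA hM (by omega)⟩

lemma exists_two_mul_eq_of_bounds {k c : ℕ} (hk : 1 ≤ k) (hc : c % 3 = 0)
    (hlow : 3 * (k - 2) * (k - 1) / 2 ≤ c) (hhigh : c ≤ 3 * k * (k - 1) / 2) :
    ∃ j ≤ k - 1, 2 * c = 3 * (k - 1) * (k - 1 - 1) + 6 * j := by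
  obtain ⟨m, rfl⟩ := Nat.exists_eq_add_of_le' hk
  have hm_even := Nat.even_iff.1 (Nat.even_mul_pred_self m)
  have hlow_eq : 3 * (m + 1 - 2) * (m + 1 - 1) = 3 * (m * (m - 1)) := by
    rw [show m + 1 - 2 = m - 1 by omega, Nat.add_sub_cancel]
    ring
  have hhigh_eq : 3 * (m + 1) * (m + 1 - 1) = 3 * (m * (m - 1)) + 6 * m := by
    obtain _ | m := m
    · rfl
    simp only [Nat.add_sub_cancel]
    ring
  rw [hlow_eq] at hlow
  rw [hhigh_eq] at hhigh
  rw [Nat.add_sub_cancel, mul_assoc]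
  exact ⟨(c - 3 * (m * (m - 1)) / 2) / 3, by omega, by omega⟩

/-- For integers `k ≥ 1`, `r ≥ 2k`, `c ≡ 0 (mod 3)` with
`3(k-2)(k-1)/2 ≤ c ≤ 3k(k-1)/2`, there exists an `(r,c)`-circulant. -/
theorem exists_circulant_of_c_mod_three_eq_zero (k c r : ℕ) (hk : 1 ≤ k) (hr : 2 * k ≤ r)
    (hc : c % 3 = 0) (hlow : 3 * (k - 2) * (k - 1) / 2 ≤ c) (hhigh : c ≤ 3 * k * (k - 1) / 2) :
    ∃ (n : ℕ), 1 ≤ n ∧ ∃ S : Set (ZMod n), (∀ s ∈ S, s ≠ 0) ∧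
      (∀ v : ZMod n, Nat.card ((Circulant n S).neighborSet v) = r) ∧
      (∀ v : ZMod n, nbhdEdgeCount (Circulant n S) v = c) := by
  obtain ⟨j, hj, hcj⟩ := exists_two_mul_eq_of_bounds hk hc hlow hhigh
  obtain ⟨A, M, hA, hM, hcard, hcount⟩ :=
    exists_isConnectionSet_int (k - 1) j ((r - 2 * k) / 2) hj
  obtain ⟨n, hn, S, hS, hScard, hScount⟩ :=
    exists_isConnectionSet_zmod hA hM (e := r % 2) (by omega)
  refine ⟨n, hn, S, fun s hs h => hS.1 (h ▸ hs), fun v => ?_, fun v => ?_⟩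
  · rw [Circulant.card_neighborSet hS, hScard, hcard]
    omega
  · have := Circulant.two_mul_nbhdEdgeCount hS v
    omega
end

section
/- Let k, c, r be integers such that k ≥ 1, r ≥ 2k + 3, r is odd, c ≡ 1 (mod 3), and 3(k−2)(k−1)/2 ≤ c ≤ 3k(k−1)/2. Then there exists an (r,c)-circulant: that is, there exist n ≥ 1 and a set S of nonzero elements of Z_n such that the circulant Circ(n, S) is r-regular and e(v) = c for every vertex v. -/
/-!
A circulant whose connection set `D = S ∪ -S` avoids `0` is `|D|`-regular, and twice the number of
edges inside a neighbourhood is the number of pairs `(a, b) ∈ D²` with `a + b ∈ D`. Via the Chinese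
remainder theorem `ZMod (6m) ≃ ZMod 6 × ZMod m` (`m` prime to `6`), take
`D = {2, 3, 4} × {0} ∪ {0} × (A ∪ -A)` for a set `A` of positive integers that is small compared
with `m`. The factor `{2, 3, 4}` makes the degree odd and contributes one edge (the triangle
`0, 2, 4` of `ZMod 6`), while each solution of `a + b = c` in `A` yields six pairs in `A ∪ -A`, one
for each sign pattern; hence `e(v) = 3 σ(A) + 1`, where `σ(A)` counts these solutions. Finally
`σ({1, …, j} ∪ {2j + 1 - s}) = C(j, 2) + s`, and adjoining elements larger than twice the sum of
the current ones enlarges `A` without changing `σ(A)`.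
-/

open Finset
open scoped Pointwise

def sumPairs {G : Type*} [Add G] [DecidableEq G] (A : Finset G) : Finset (G × G) :=
  (A ×ˢ A).filter fun p => p.1 + p.2 ∈ A

lemma mem_sumPairs {G : Type*} [Add G] [DecidableEq G] {A : Finset G} {p : G × G} :
    p ∈ sumPairs A ↔ p.1 ∈ A ∧ p.2 ∈ A ∧ p.1 + p.2 ∈ A := by
  simp [sumPairs, and_assoc]

lemma SimpleGraph.two_mul_nbhdEdgeCount {V : Type*} (G : SimpleGraph V) (v : V)
    [Finite (G.neighborSet v)] :
    2 * nbhdEdgeCount G v = Nat.card {p : V × V //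
      p.1 ∈ G.neighborSet v ∧ p.2 ∈ G.neighborSet v ∧ G.Adj p.1 p.2} := by
  classical
  have := Fintype.ofFinite (G.neighborSet v)
  set H := G.induce (G.neighborSet v)
  rw [nbhdEdgeCount, Nat.card_eq_fintype_card, ← edgeFinset_card,
    ← H.dart_card_eq_twice_card_edges, ← Nat.card_eq_fintype_card]
  exact Nat.card_congr
    { toFun := fun d => ⟨(d.fst.1, d.snd.1), d.fst.2, d.snd.2, d.adj⟩
      invFun := fun p => ⟨(⟨p.1.1, p.2.1⟩, ⟨p.1.2, p.2.2.1⟩), p.2.2.2⟩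
      left_inv := fun _ => rfl
      right_inv := fun _ => rfl }

section Circulant

variable {n : ℕ} {G : Type*} [AddCommGroup G] (φ : ZMod n ≃+ G) {E : Finset G}

lemma circulant_preimage_adj_iff (h0 : 0 ∉ E) (hE : ∀ x ∈ E, -x ∈ E) {x y : ZMod n} :
    (Circulant n (φ ⁻¹' E)).Adj x y ↔ φ x - φ y ∈ E := by
  change x ≠ y ∧ x - y ∈ φ ⁻¹' E ∪ -(φ ⁻¹' E) ↔ _
  simp only [Set.mem_union, Set.mem_neg, Set.mem_preimage, mem_coe, map_sub, neg_sub]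
  constructor
  · rintro ⟨-, h | h⟩
    · exact h
    · simpa using hE _ h
  · intro h
    refine ⟨fun hxy => h0 ?_, Or.inl h⟩
    simpa [hxy] using h

lemma card_neighborSet_circulant_preimage (h0 : 0 ∉ E) (hE : ∀ x ∈ E, -x ∈ E) (v : ZMod n) :
    Nat.card ((Circulant n (φ ⁻¹' E)).neighborSet v) = #E := by
  rw [← Nat.card_eq_finsetCard]
  exact Nat.card_congr <| (φ.toEquiv.trans (Equiv.subLeft (φ v))).subtypeEquiv fun w =>
    circulant_preimage_adj_iff φ h0 hE

lemma two_mul_nbhdEdgeCount_circulant_preimage [NeZero n] [DecidableEq G] (h0 : 0 ∉ E)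
    (hE : ∀ x ∈ E, -x ∈ E) (v : ZMod n) :
    2 * nbhdEdgeCount (Circulant n (φ ⁻¹' E)) v = #(sumPairs E) := by
  have hneg : ∀ x, -x ∈ E ↔ x ∈ E := fun x => ⟨fun h => by simpa using hE _ h, hE x⟩
  rw [SimpleGraph.two_mul_nbhdEdgeCount, ← Nat.card_eq_finsetCard]
  -- with `a = φ v - φ x` and `b = φ y - φ v` one has `φ x - φ y = -(a + b)`
  refine Nat.card_congr <| ((φ.toEquiv.trans (Equiv.subLeft (φ v))).prodCongr
    (φ.toEquiv.trans (Equiv.subRight (φ v)))).subtypeEquiv fun p => ?_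
  simp only [SimpleGraph.mem_neighborSet, circulant_preimage_adj_iff φ h0 hE, mem_sumPairs,
    Equiv.prodCongr_apply, Prod.map, Equiv.trans_apply, Equiv.subLeft_apply,
    Equiv.subRight_apply, AddEquiv.toEquiv_eq_coe, AddEquiv.coe_toEquiv]
  rw [← hneg (φ p.2 - φ v), ← hneg (φ v - φ p.1 + (φ p.2 - φ v))]
  simp only [neg_sub, sub_add_sub_cancel']

end Circulant

lemma card_sumPairs_prod_union {G H : Type*} [AddZeroClass G] [AddZeroClass H] [DecidableEq G]
    [DecidableEq H] {T : Finset G} {B : Finset H} (hT : 0 ∉ T) (hB : 0 ∉ B) :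
    #(sumPairs (T ×ˢ {0} ∪ {0} ×ˢ B)) = #(sumPairs T) + #(sumPairs B) := by
  have hsplit : sumPairs (T ×ˢ {0} ∪ {0} ×ˢ B) =
      (sumPairs T).image (fun p => ((p.1, 0), (p.2, 0))) ∪
        (sumPairs B).image (fun p => ((0, p.1), (0, p.2))) := by
    ext ⟨⟨a, b⟩, ⟨c, d⟩⟩
    simp only [mem_sumPairs, mem_union, mem_product, mem_singleton, mem_image, Prod.mk_add_mk,
      Prod.mk.injEq, Prod.exists]
    grind [add_zero, zero_add]
  rw [hsplit, card_union_of_disjoint, card_image_of_injective, card_image_of_injective]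
  · intro p q h; simp_all [Prod.ext_iff]
  · intro p q h; simp_all [Prod.ext_iff]
  · rw [disjoint_left]
    simp only [mem_image, mem_sumPairs]
    grind [add_zero, zero_add]

section IntCast

variable {m : ℕ} {C : Finset ℤ}

lemma ZMod.intCast_eq_intCast_iff_of_abs_sub_lt {a b : ℤ} (h : |a - b| < m) :
    (a : ZMod m) = b ↔ a = b := by
  rw [ZMod.intCast_eq_intCast_iff_dvd_sub]
  refine ⟨fun hdvd => ?_, fun hab => by simp [hab]⟩
  have := Int.eq_zero_of_abs_lt_dvd hdvd (by rwa [abs_sub_comm])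
  omega

lemma injOn_intCast (hC : ∀ c ∈ C, 2 * |c| < m) : Set.InjOn (Int.cast : ℤ → ZMod m) C :=
  fun a ha b hb hab => (ZMod.intCast_eq_intCast_iff_of_abs_sub_lt
    ((abs_sub a b).trans_lt (by linarith [hC a ha, hC b hb]))).mp hab

lemma zero_notMem_image_intCast (hC : ∀ c ∈ C, |c| < m) (h0 : 0 ∉ C) :
    (0 : ZMod m) ∉ C.image Int.cast := by
  rw [mem_image]
  rintro ⟨c, hc, hc0⟩
  rw [← Int.cast_zero, ZMod.intCast_eq_intCast_iff_of_abs_sub_lt (by simpa using hC c hc)] at hc0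
  exact h0 (hc0 ▸ hc)

lemma card_sumPairs_image_intCast (hC : ∀ c ∈ C, 3 * |c| < m) :
    #(sumPairs (C.image (Int.cast : ℤ → ZMod m))) = #(sumPairs C) := by
  have hsplit : sumPairs (C.image (Int.cast : ℤ → ZMod m)) =
      (sumPairs C).image (Prod.map Int.cast Int.cast) := by
    ext ⟨u, w⟩
    simp only [mem_sumPairs, mem_image, Prod.map, Prod.exists, Prod.mk.injEq]
    constructor
    · rintro ⟨⟨a, ha, rfl⟩, ⟨b, hb, rfl⟩, ⟨c, hc, hcab⟩⟩
      refine ⟨a, b, ⟨ha, hb, ?_⟩, rfl, rfl⟩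
      have hsub : |c - (a + b)| < m := by
        linarith [abs_sub c (a + b), abs_add_le a b, hC a ha, hC b hb, hC c hc]
      rwa [(ZMod.intCast_eq_intCast_iff_of_abs_sub_lt hsub).mp (by push_cast; exact hcab)] at hc
    · rintro ⟨a, b, ⟨ha, hb, hab⟩, rfl, rfl⟩
      exact ⟨⟨a, ha, rfl⟩, ⟨b, hb, rfl⟩, ⟨a + b, hab, by push_cast; rfl⟩⟩
  have hinj := injOn_intCast (m := m) fun c hc => (hC c hc).trans_le' (by linarith [abs_nonneg c])
  rw [hsplit, card_image_of_injOn]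
  rintro ⟨a, b⟩ hab ⟨a', b'⟩ hab' h
  simp only [mem_coe, mem_sumPairs] at hab hab'
  simp only [Prod.map, Prod.mk.injEq] at h
  rw [hinj hab.1 hab'.1 h.1, hinj hab.2.1 hab'.2.1 h.2]

end IntCast

section Int

variable {A : Finset ℤ}

lemma mem_union_neg_iff (hA : ∀ a ∈ A, 0 < a) {z : ℤ} :
    z ∈ A ∪ -A ↔ (0 < z ∧ z ∈ A) ∨ (z < 0 ∧ -z ∈ A) := by
  rw [mem_union, mem_neg']
  constructor
  · rintro (h | h)
    · exact Or.inl ⟨hA z h, h⟩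
    · exact Or.inr ⟨by linarith [hA _ h], h⟩
  · rintro (⟨-, h⟩ | ⟨-, h⟩) <;> tauto

lemma card_filter_sumPairs_union_neg_pos (hA : ∀ a ∈ A, 0 < a) :
    #((sumPairs (A ∪ -A)).filter fun p => 0 < p.1 + p.2) = 3 * #(sumPairs A) := by
  set Q := (sumPairs (A ∪ -A)).filter fun p => 0 < p.1 + p.2
  rw [← card_filter_add_card_filter_not fun p : ℤ × ℤ => 0 < p.1,
    ← card_filter_add_card_filter_not (s := Q.filter _) fun p : ℤ × ℤ => 0 < p.2]
  have h1 : #((Q.filter fun p => 0 < p.1).filter fun p => 0 < p.2) = #(sumPairs A) := by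
    apply card_nbij' id id <;>
      simp only [Set.MapsTo, Set.LeftInvOn, Set.RightInvOn, Q, mem_coe, mem_filter,
        mem_sumPairs, mem_union_neg_iff hA, Prod.forall, id] <;> grind
  have h2 : #((Q.filter fun p => 0 < p.1).filter fun p => ¬ 0 < p.2) = #(sumPairs A) := by
    apply card_nbij' (fun p => (p.1 + p.2, -p.2)) (fun p => (p.1 + p.2, -p.2)) <;>
      simp only [Set.MapsTo, Set.LeftInvOn, Set.RightInvOn, Q, mem_coe, mem_filter,
        mem_sumPairs, mem_union_neg_iff hA, Prod.forall] <;> grind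
  have h3 : #(Q.filter fun p => ¬ 0 < p.1) = #(sumPairs A) := by
    apply card_nbij' (fun p => (-p.1, p.1 + p.2)) (fun p => (-p.1, p.1 + p.2)) <;>
      simp only [Set.MapsTo, Set.LeftInvOn, Set.RightInvOn, Q, mem_coe, mem_filter,
        mem_sumPairs, mem_union_neg_iff hA, Prod.forall] <;> grind
  omega

lemma card_sumPairs_union_neg (hA : ∀ a ∈ A, 0 < a) :
    #(sumPairs (A ∪ -A)) = 6 * #(sumPairs A) := by
  rw [← card_filter_add_card_filter_not (s := sumPairs (A ∪ -A)) fun p => 0 < p.1 + p.2]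
  have hneg : #((sumPairs (A ∪ -A)).filter fun p => ¬ 0 < p.1 + p.2) =
      #((sumPairs (A ∪ -A)).filter fun p => 0 < p.1 + p.2) := by
    apply card_nbij' (fun p => -p) (fun p => -p) <;>
      simp only [Set.MapsTo, Set.LeftInvOn, Set.RightInvOn, mem_coe, mem_filter, mem_sumPairs,
        mem_union_neg_iff hA, Prod.forall, Prod.fst_neg, Prod.snd_neg] <;> grind
  rw [hneg, card_filter_sumPairs_union_neg_pos hA]
  ring

lemma card_sumPairs_insert_of_forall_lt (hA : ∀ a ∈ A, 0 < a) {p : ℤ} (hp0 : 0 < p)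
    (hp : ∀ a ∈ A, a < p) :
    #(sumPairs (insert p A)) = #(sumPairs A) + #(A.filter fun x => p - x ∈ A) := by
  have hpA : p ∉ A := fun h => (hp p h).false
  have hbound : ∀ z ∈ insert p A, 0 < z ∧ z ≤ p := by
    simp only [mem_insert, forall_eq_or_imp]
    exact ⟨⟨hp0, le_rfl⟩, fun a ha => ⟨hA a ha, (hp a ha).le⟩⟩
  have hsplit : sumPairs (insert p A) =
      sumPairs A ∪ (A.filter fun x => p - x ∈ A).image fun x => (x, p - x) := by
    ext ⟨x, y⟩
    simp only [mem_sumPairs, mem_union, mem_image, mem_filter, Prod.mk.injEq]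
    constructor
    · rintro ⟨hx, hy, hxy⟩
      have hx' := hbound x hx
      have hy' := hbound y hy
      have hxy' := hbound _ hxy
      have hxA : x ∈ A := (mem_insert.mp hx).resolve_left (by omega)
      have hyA : y ∈ A := (mem_insert.mp hy).resolve_left (by omega)
      rcases mem_insert.mp hxy with hsum | hsum
      · exact Or.inr ⟨x, ⟨hxA, by rwa [← hsum, add_sub_cancel_left]⟩, rfl, by omega⟩
      · exact Or.inl ⟨hxA, hyA, hsum⟩
    · rintro (⟨hx, hy, hxy⟩ | ⟨x, ⟨hx, hpx⟩, rfl, rfl⟩)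
      · exact ⟨mem_insert_of_mem hx, mem_insert_of_mem hy, mem_insert_of_mem hxy⟩
      · exact ⟨mem_insert_of_mem hx, mem_insert_of_mem hpx, by simp⟩
  rw [hsplit, card_union_of_disjoint, card_image_of_injective _ fun a b h => (Prod.mk.inj h).1]
  rw [disjoint_left]
  rintro _ h hmem
  obtain ⟨a, -, rfl⟩ := mem_image.mp hmem
  exact hpA (by simpa using (mem_sumPairs.mp h).2.2)

lemma card_filter_sub_mem_Icc (j : ℕ) {t : ℤ} (ht : j + 1 ≤ t) :
    #((Icc (1 : ℤ) j).filter fun x => t - x ∈ Icc (1 : ℤ) j) = (2 * j + 1 - t).toNat := by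
  have : (Icc (1 : ℤ) j).filter (fun x => t - x ∈ Icc (1 : ℤ) j) = Icc (t - j) j := by
    ext x
    simp only [mem_filter, mem_Icc]
    omega
  rw [this, Int.card_Icc]
  congr 1
  ring

lemma card_sumPairs_Icc (j : ℕ) : #(sumPairs (Icc (1 : ℤ) j)) = j.choose 2 := by
  induction j with
  | zero => rfl
  | succ j ih =>
    have hIcc : Icc (1 : ℤ) ((j + 1 : ℕ) : ℤ) = insert ((j : ℤ) + 1) (Icc (1 : ℤ) j) := by
      ext x; simp only [mem_insert, mem_Icc]; omega
    have hpos : ∀ a ∈ Icc (1 : ℤ) j, 0 < a := fun a ha => by simp only [mem_Icc] at ha; omega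
    have hlt : ∀ a ∈ Icc (1 : ℤ) j, a < j + 1 := fun a ha => by simp only [mem_Icc] at ha; omega
    rw [hIcc, card_sumPairs_insert_of_forall_lt hpos (by omega) hlt, ih,
      card_filter_sub_mem_Icc j le_rfl, Nat.choose_succ_left j 2 two_pos, Nat.choose_one_right]
    omega

lemma exists_card_add_card_sumPairs_eq (hA : ∀ a ∈ A, 0 < a) (e : ℕ) :
    ∃ A' : Finset ℤ, (∀ a ∈ A', 0 < a) ∧ #A' = #A + e ∧ #(sumPairs A') = #(sumPairs A) := by
  induction e with
  | zero => exact ⟨A, hA, rfl, rfl⟩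
  | succ e ih =>
    obtain ⟨A', hA'pos, hA'card, hA'sum⟩ := ih
    set p := 2 * ∑ a ∈ A', a + 1
    have hle : ∀ a ∈ A', a ≤ ∑ b ∈ A', b := fun a ha =>
      single_le_sum (fun b hb => (hA'pos b hb).le) ha
    have hsum : 0 ≤ ∑ b ∈ A', b := sum_nonneg fun b hb => (hA'pos b hb).le
    have hp : ∀ a ∈ A', 2 * a < p := fun a ha => by have := hle a ha; omega
    refine ⟨insert p A', ?_, ?_, ?_⟩
    · simp only [mem_insert, forall_eq_or_imp]; exact ⟨by omega, hA'pos⟩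
    · rw [card_insert_of_notMem fun h => by have := hp p h; omega, hA'card]; rfl
    · rw [card_sumPairs_insert_of_forall_lt hA'pos (by omega)
        (fun a ha => by have := hp a ha; have := hA'pos a ha; omega), hA'sum, add_eq_left,
        card_eq_zero, filter_eq_empty_iff]
      intro x hx hpx
      have := hp x hx; have := hle _ hpx; omega

lemma exists_finset_card_sumPairs (j s e : ℕ) (hs : s ≤ j) :
    ∃ A : Finset ℤ, (∀ a ∈ A, 0 < a) ∧ #A = j + 1 + e ∧ #(sumPairs A) = j.choose 2 + s := by
  set w : ℤ := 2 * j + 1 - s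
  have hpos : ∀ a ∈ Icc (1 : ℤ) j, 0 < a := fun a ha => by simp only [mem_Icc] at ha; omega
  have hlt : ∀ a ∈ Icc (1 : ℤ) j, a < w := fun a ha => by simp only [mem_Icc] at ha; omega
  have hcore : ∀ a ∈ insert w (Icc (1 : ℤ) j), 0 < a := by
    simp only [mem_insert, forall_eq_or_imp]; exact ⟨by omega, hpos⟩
  obtain ⟨A, hApos, hAcard, hAsum⟩ := exists_card_add_card_sumPairs_eq hcore e
  refine ⟨A, hApos, ?_, ?_⟩
  · rw [hAcard, card_insert_of_notMem fun h => (hlt w h).false, Int.card_Icc]; omega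
  · rw [hAsum, card_sumPairs_insert_of_forall_lt hpos (by omega) hlt, card_sumPairs_Icc,
      card_filter_sub_mem_Icc j (by omega)]
    omega

end Int

lemma exists_circulant_of_symm_finset_zmod {m : ℕ} (hm : Nat.Coprime 6 m) {B : Finset (ZMod m)}
    (hB0 : 0 ∉ B) (hB : ∀ x ∈ B, -x ∈ B) :
    ∃ n : ℕ, 1 ≤ n ∧ ∃ S : Set (ZMod n), (∀ s ∈ S, s ≠ 0) ∧
      (∀ v : ZMod n, Nat.card ((Circulant n S).neighborSet v) = #B + 3) ∧
      (∀ v : ZMod n, 2 * nbhdEdgeCount (Circulant n S) v = #(sumPairs B) + 2) := by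
  have hm0 : m ≠ 0 := by rintro rfl; simp at hm
  have : NeZero (6 * m) := ⟨by omega⟩
  set T : Finset (ZMod 6) := {2, 3, 4}
  have hT0 : 0 ∉ T := by decide
  have hT : ∀ x ∈ T, -x ∈ T := by decide
  set E := T ×ˢ {0} ∪ {0} ×ˢ B
  have hE0 : 0 ∉ E := by
    simp only [E, mem_union, mem_product, mem_singleton, Prod.fst_zero, Prod.snd_zero]
    exact fun h => h.elim (fun h => hT0 h.1) fun h => hB0 h.2
  have hE : ∀ x ∈ E, -x ∈ E := by
    simp only [E, mem_union, mem_product, mem_singleton, Prod.fst_neg, Prod.snd_neg, neg_eq_zero]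
    rintro x (⟨hx, h⟩ | ⟨h, hx⟩)
    · exact Or.inl ⟨hT _ hx, h⟩
    · exact Or.inr ⟨h, hB _ hx⟩
  have hEcard : #E = #B + 3 := by
    rw [card_union_of_disjoint, card_product, card_product, card_singleton, card_singleton,
      show #T = 3 by decide]
    · ring
    rw [disjoint_left]
    rintro ⟨x, y⟩ h h'
    exact hT0 (mem_singleton.mp (mem_product.mp h').1 ▸ (mem_product.mp h).1)
  have hEsum : #(sumPairs E) = #(sumPairs B) + 2 := by
    rw [card_sumPairs_prod_union hT0 hB0, show #(sumPairs T) = 2 by decide, add_comm]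
  set φ := (ZMod.chineseRemainder hm).toAddEquiv
  refine ⟨6 * m, by omega, φ ⁻¹' E, fun s hs hs0 => hE0 (by simpa [hs0] using hs),
    fun v => ?_, fun v => ?_⟩
  · rw [card_neighborSet_circulant_preimage φ hE0 hE, hEcard]
  · rw [two_mul_nbhdEdgeCount_circulant_preimage φ hE0 hE, hEsum]

lemma exists_circulant_of_pos_finset (A : Finset ℤ) (hA : ∀ a ∈ A, 0 < a) :
    ∃ n : ℕ, 1 ≤ n ∧ ∃ S : Set (ZMod n), (∀ s ∈ S, s ≠ 0) ∧
      (∀ v : ZMod n, Nat.card ((Circulant n S).neighborSet v) = 2 * #A + 3) ∧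
      (∀ v : ZMod n, nbhdEdgeCount (Circulant n S) v = 3 * #(sumPairs A) + 1) := by
  set m := 6 * (∑ a ∈ A, a).toNat + 1
  have hbound : ∀ c ∈ A ∪ -A, 3 * |c| < m := by
    intro c hc
    rw [mem_union_neg_iff hA] at hc
    have hle : ∀ a ∈ A, a ≤ ∑ b ∈ A, b := fun a ha => single_le_sum (fun b hb => (hA b hb).le) ha
    rcases hc with ⟨hc0, hc⟩ | ⟨hc0, hc⟩
    · have := hle c hc; rw [abs_of_pos hc0]; omega
    · have := hle _ hc; rw [abs_of_neg hc0]; omega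
  have hdisj : Disjoint A (-A) := by
    rw [disjoint_left]
    exact fun a ha ha' => (hA a ha).not_gt (by linarith [hA _ (mem_neg'.mp ha')])
  set B := (A ∪ -A).image (Int.cast : ℤ → ZMod m)
  have hB : ∀ x ∈ B, -x ∈ B := by
    simp only [B, mem_image, forall_exists_index, and_imp]
    rintro _ c hc rfl
    exact ⟨-c, by simpa [mem_neg', or_comm] using hc, by push_cast; rfl⟩
  have hBcard : #B = 2 * #A := by
    rw [card_image_of_injOn (injOn_intCast fun c hc => by linarith [hbound c hc, abs_nonneg c]),
      card_union_of_disjoint hdisj, card_neg, two_mul]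
  have hB0 : 0 ∉ B := zero_notMem_image_intCast
    (fun c hc => by linarith [hbound c hc, abs_nonneg c]) fun h => by
      rw [mem_union_neg_iff hA] at h; omega
  obtain ⟨n, hn, S, hS0, hdeg, hedge⟩ := exists_circulant_of_symm_finset_zmod (m := m) (by simp [m]) hB0 hB
  refine ⟨n, hn, S, hS0, fun v => by rw [hdeg, hBcard], fun v => ?_⟩
  have := hedge v
  rw [card_sumPairs_image_intCast hbound, card_sumPairs_union_neg hA] at this
  omega

lemma three_mul_choose_two (a : ℕ) : 3 * a.choose 2 = 3 * a * (a - 1) / 2 := by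
  obtain ⟨t, ht⟩ := Nat.even_mul_pred_self a
  rw [Nat.choose_two_right, mul_assoc, ht]
  omega

theorem exists_circulant_of_c_mod_three_eq_one_odd_general (k c r : ℕ)
    (hr : 2 * k + 3 ≤ r) (hrodd : r % 2 = 1) (hc : c % 3 = 1)
    (hlow : 3 * (k - 2) * (k - 1) / 2 ≤ c) (hhigh : c ≤ 3 * k * (k - 1) / 2) :
    ∃ (n : ℕ), 1 ≤ n ∧ ∃ S : Set (ZMod n), (∀ s ∈ S, s ≠ 0) ∧
      (∀ v : ZMod n, Nat.card ((Circulant n S).neighborSet v) = r) ∧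
      (∀ v : ZMod n, nbhdEdgeCount (Circulant n S) v = c) := by
  rcases k with _ | j
  · simp at hhigh; omega
  have hlow' : 3 * j.choose 2 ≤ c := by
    rwa [show j + 1 - 2 = j - 1 by omega, Nat.add_sub_cancel, mul_right_comm,
      ← three_mul_choose_two] at hlow
  have hhigh' : c ≤ 3 * (j.choose 2 + j) := by
    rw [← three_mul_choose_two, Nat.choose_succ_left j 2 two_pos, Nat.choose_one_right] at hhigh
    omega
  obtain ⟨A, hApos, hAcard, hAsum⟩ :=
    exists_finset_card_sumPairs j ((c - 1) / 3 - j.choose 2) ((r - 2 * j - 5) / 2) (by omega)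
  obtain ⟨n, hn, S, hS0, hdeg, hedge⟩ := exists_circulant_of_pos_finset A hApos
  refine ⟨n, hn, S, hS0, fun v => ?_, fun v => ?_⟩
  · rw [hdeg, hAcard]; omega
  · rw [hedge, hAsum]; omega

/-- For integers `k ≥ 1`, `r ≥ 2k + 3` with `r` odd, `c ≡ 1 (mod 3)` with
`3(k-2)(k-1)/2 ≤ c ≤ 3k(k-1)/2`, there exists an `(r,c)`-circulant. -/
theorem exists_circulant_of_c_mod_three_eq_one_odd (k c r : ℕ) (hk : 1 ≤ k)
    (hr : 2 * k + 3 ≤ r) (hrodd : r % 2 = 1) (hc : c % 3 = 1)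
    (hlow : 3 * (k - 2) * (k - 1) / 2 ≤ c) (hhigh : c ≤ 3 * k * (k - 1) / 2) :
    ∃ (n : ℕ), 1 ≤ n ∧ ∃ S : Set (ZMod n), (∀ s ∈ S, s ≠ 0) ∧
      (∀ v : ZMod n, Nat.card ((Circulant n S).neighborSet v) = r) ∧
      (∀ v : ZMod n, nbhdEdgeCount (Circulant n S) v = c) :=
  exists_circulant_of_c_mod_three_eq_one_odd_general k c r hr hrodd hc hlow hhigh
end

section
/- Let c and r be positive integers with c not congruent to 2 modulo 3 and with r ≥ 6 + √((8c − 5)/3) (as real numbers). Then there exists an (r,c)-circulant: there exist n ≥ 1 and a set S of nonzero elements of Z_n such that the circulant Circ(n, S) is r-regular and e(v) = c for every vertex v. -/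
/-!
For `S ⊆ ℤ/n` symmetric with `0 ∉ S`, `Circ(n, S)` is `|S|`-regular and `2 e(v)` is the number
of pairs `(s, t) ∈ S²` with `s - t ∈ S`. Both quantities are additive under the Cartesian
product of circulants of coprime orders, which is again a circulant because `ℤ/mn ≅ ℤ/m × ℤ/n`.
So an `(r, c)`-circulant is obtained as a product of four factors:

* `Circ(N, {±1, …, ±a, ±m})` with `m = 2a + 1 - j`, a `(2a + 2, 3 (a choose 2) + 3j)`-circulant,
  because adding `±y` to a symmetric `X` with `2y ∉ X` adds `6 #{x ∈ X | y - x ∈ X}` such pairs;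
* the `(2p, 0)`-circulant on the odd residues `±1, ±3, …, ±(2p - 1)`;
* `K₃` when `c ≡ 1 (mod 3)`, and `K₂` to adjust the parity of `r`.

Writing `c = 3 ((a choose 2) + j) + (c mod 3)` with `1 ≤ j ≤ a` (or `a = j = 0`), the hypothesis
on `r` guarantees `r ≥ 2a + 2 + 2 (c mod 3)`, which leaves room for the last three factors.
-/

open Finset
open scoped Pointwise

section DiffCount

variable {A B : Type*} [AddCommGroup A] [DecidableEq A] [AddCommGroup B] [DecidableEq B]

def diffCount (X Y Z : Finset A) : ℕ := #{p ∈ X ×ˢ Y | p.1 - p.2 ∈ Z}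

variable {X X' Y Y' Z Z' : Finset A}

lemma diffCount_union_left (h : Disjoint X X') :
    diffCount (X ∪ X') Y Z = diffCount X Y Z + diffCount X' Y Z := by
  rw [diffCount, union_product, filter_union,
    card_union_of_disjoint (disjoint_filter_filter (disjoint_product.2 (Or.inl h)))]
  rfl

lemma diffCount_union_mid (h : Disjoint Y Y') :
    diffCount X (Y ∪ Y') Z = diffCount X Y Z + diffCount X Y' Z := by
  rw [diffCount, product_union, filter_union,
    card_union_of_disjoint (disjoint_filter_filter (disjoint_product.2 (Or.inr h)))]
  rfl

lemma diffCount_union_right (h : Disjoint Z Z') :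
    diffCount X Y (Z ∪ Z') = diffCount X Y Z + diffCount X Y Z' := by
  simp only [diffCount, mem_union, filter_or]
  exact card_union_of_disjoint (disjoint_filter.2 fun _ _ hZ hZ' ↦ disjoint_left.1 h hZ hZ')

lemma diffCount_eq_zero (h : ∀ x ∈ X, ∀ y ∈ Y, x - y ∉ Z) : diffCount X Y Z = 0 := by
  refine card_eq_zero.2 (filter_eq_empty_iff.2 fun p hp ↦ ?_)
  rw [mem_product] at hp
  exact h _ hp.1 _ hp.2

lemma diffCount_neg : diffCount (-X) (-Y) (-Z) = diffCount X Y Z :=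
  card_equiv (Equiv.neg (A × A)) fun p ↦ by simp [neg_add_eq_sub]

lemma diffCount_swap : diffCount X Y Z = diffCount Y X (-Z) :=
  card_equiv (Equiv.prodComm A A) fun p ↦ by simp [and_comm]

lemma diffCount_rotate : diffCount X Y Z = diffCount Z (-Y) X := by
  let e : A × A ≃ A × A :=
    ⟨fun p ↦ (p.1 - p.2, -p.2), fun p ↦ (p.1 - p.2, -p.2), fun p ↦ by simp, fun p ↦ by simp⟩
  exact card_equiv e fun p ↦ by simp [e]; tauto

lemma diffCount_singleton_left (y : A) : diffCount {y} X Z = #{t ∈ X | y - t ∈ Z} := by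
  rw [diffCount, singleton_product, filter_map, card_map]
  rfl

lemma diffCount_union_union_union (h : Disjoint X Y) :
    diffCount (X ∪ Y) (X ∪ Y) (X ∪ Y) = diffCount X X X + diffCount Y Y Y +
      (diffCount Y X X + diffCount X Y X + diffCount X X Y) +
      (diffCount X Y Y + diffCount Y X Y + diffCount Y Y X) := by
  simp only [diffCount_union_left h, diffCount_union_mid h, diffCount_union_right h]
  ring

lemma diffCount_union_of_neg_eq {P : Finset A} (hX : -X = X) (hP : -P = P) (hXP : Disjoint X P)
    (hPP : ∀ p ∈ P, ∀ q ∈ P, p - q ∉ X ∪ P) :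
    diffCount (X ∪ P) (X ∪ P) (X ∪ P) = diffCount X X X + 3 * diffCount P X X := by
  have hPP' : ∀ p ∈ P, ∀ q ∈ P, p - q ∉ X ∧ p - q ∉ P := fun p hp q hq ↦ by
    simpa only [mem_union, not_or] using hPP p hp q hq
  have hnegP : ∀ p ∈ P, -p ∈ P := fun p hp ↦ by rw [← hP]; exact neg_mem_neg hp
  rw [diffCount_union_union_union hXP, diffCount_swap (X := X) (Y := P),
    diffCount_rotate (X := X) (Y := X) (Z := P), hX,
    diffCount_eq_zero fun p hp q hq ↦ (hPP' p hp q hq).2,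
    diffCount_eq_zero fun x hx p hp hxp ↦ (hPP' _ hxp _ (hnegP p hp)).1 (by simpa using hx),
    diffCount_eq_zero fun p hp x hx hpx ↦ (hPP' p hp _ hpx).1 (by simpa using hx),
    diffCount_eq_zero fun p hp q hq ↦ (hPP' p hp q hq).1]
  ring

lemma diffCount_image (f : A →+ B) (hf : Set.InjOn f X)
    (h : ∀ x ∈ X, ∀ y ∈ X, ∀ z ∈ X, f x - f y = f z → x - y = z) :
    diffCount (X.image f) (X.image f) (X.image f) = diffCount X X X := by
  symm
  refine card_nbij (Prod.map f f) (fun p hp ↦ ?_) (fun p hp q hq hpq ↦ ?_) (fun p hp ↦ ?_)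
  · simp only [coe_filter, mem_product, Set.mem_ofPred_eq] at hp
    simp only [coe_filter, mem_product, Set.mem_ofPred_eq, Prod.map_fst, Prod.map_snd, mem_image]
    exact ⟨⟨⟨_, hp.1.1, rfl⟩, ⟨_, hp.1.2, rfl⟩⟩, _, hp.2, by rw [map_sub]⟩
  · simp only [coe_filter, mem_product, Set.mem_ofPred_eq] at hp hq
    simp only [Prod.map, Prod.mk.injEq] at hpq
    exact Prod.ext (hf hp.1.1 hq.1.1 hpq.1) (hf hp.1.2 hq.1.2 hpq.2)
  · obtain ⟨p1, p2⟩ := p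
    simp only [coe_filter, mem_product, mem_image, Set.mem_ofPred_eq] at hp
    obtain ⟨⟨⟨x, hx, rfl⟩, ⟨y, hy, rfl⟩⟩, z, hz, hxyz⟩ := hp
    exact ⟨(x, y), by simp [h x hx y hy z hz hxyz.symm, hx, hy, hz], rfl⟩

end DiffCount

section ConnectionSet

variable {A B : Type*} [AddCommGroup A] [DecidableEq A] [AddCommGroup B] [DecidableEq B]

/-- `diffCount S S S` counts the ordered pairs of adjacent vertices in the neighbourhood `S` of
`0` in the Cayley graph of `S`, hence twice the number of edges there. -/
structure IsConnectionSet_s11 (S : Finset A) (r c : ℕ) : Prop where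
  zero_notMem : (0 : A) ∉ S
  neg_eq : -S = S
  card_eq : #S = r
  diffCount_eq : diffCount S S S = 2 * c

variable {S : Finset A} {U : Finset B} {r c r' c' : ℕ}

lemma isConnectionSet_empty : IsConnectionSet_s11 (∅ : Finset A) 0 0 where
  zero_notMem := notMem_empty 0
  neg_eq := neg_empty
  card_eq := card_empty
  diffCount_eq := by simp [diffCount]

lemma IsConnectionSet_s11.neg_mem (hS : IsConnectionSet_s11 S r c) {x : A} (hx : x ∈ S) : -x ∈ S := by
  rw [← hS.neg_eq]; exact neg_mem_neg hx

lemma IsConnectionSet_s11.union {T : Finset A} (hS : IsConnectionSet_s11 S r c)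
    (hT : IsConnectionSet_s11 T r' c') (hST : Disjoint S T) (h : ∀ x ∈ S, ∀ y ∈ T, x - y ∉ S ∪ T) :
    IsConnectionSet_s11 (S ∪ T) (r + r') (c + c') where
  zero_notMem := by simp [hS.zero_notMem, hT.zero_notMem]
  neg_eq := by rw [← image_neg_eq_neg, image_union, image_neg_eq_neg, image_neg_eq_neg,
    hS.neg_eq, hT.neg_eq]
  card_eq := by rw [card_union_of_disjoint hST, hS.card_eq, hT.card_eq]
  diffCount_eq := by
    have h' : ∀ x ∈ S, ∀ y ∈ T, x - y ∉ S ∧ x - y ∉ T := fun x hx y hy ↦ by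
      simpa only [mem_union, not_or] using h x hx y hy
    rw [diffCount_union_union_union hST, hS.diffCount_eq, hT.diffCount_eq]
    -- each relation `s - t = u` mixing `S` and `T` rearranges to `x - y ∈ S ∪ T`, `x ∈ S`, `y ∈ T`
    simp only [diffCount_eq_zero fun u hu s hs hus ↦ (h' s hs u hu).1 (by
          simpa using hS.neg_mem hus),
      diffCount_eq_zero fun s hs u hu ↦ (h' s hs u hu).1,
      diffCount_eq_zero fun s hs s' hs' hss ↦ (h' s hs _ hss).1 (by simpa using hs'),
      diffCount_eq_zero fun s hs u hu ↦ (h' s hs u hu).2,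
      diffCount_eq_zero fun u hu s hs hus ↦ (h' s hs u hu).2 (by simpa using hT.neg_mem hus),
      diffCount_eq_zero fun u hu u' hu' huu ↦ (h' _ huu u hu).2 (by simpa using hT.neg_mem hu')]
    ring

lemma IsConnectionSet_s11.image (hS : IsConnectionSet_s11 S r c) (f : A →+ B) (hf : Set.InjOn f S)
    (h0 : ∀ x ∈ S, f x ≠ 0) (h : ∀ x ∈ S, ∀ y ∈ S, ∀ z ∈ S, f x - f y = f z → x - y = z) :
    IsConnectionSet_s11 (S.image f) r c where
  zero_notMem := by simpa using h0
  neg_eq := by rw [← image_neg f, hS.neg_eq]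
  card_eq := by rw [card_image_of_injOn hf, hS.card_eq]
  diffCount_eq := by rw [diffCount_image f hf h, hS.diffCount_eq]

lemma IsConnectionSet_s11.image_of_injective (hS : IsConnectionSet_s11 S r c) (f : A →+ B)
    (hf : Function.Injective f) : IsConnectionSet_s11 (S.image f) r c :=
  hS.image f hf.injOn
    (fun x hx ↦ (map_ne_zero_iff f hf).2 (ne_of_mem_of_not_mem hx hS.zero_notMem))
    fun x _ y _ z _ hxyz ↦ hf (by rw [map_sub, hxyz])

lemma IsConnectionSet_s11.prod (hS : IsConnectionSet_s11 S r c) (hU : IsConnectionSet_s11 U r' c') :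
    IsConnectionSet_s11 (S.image (AddMonoidHom.inl A B) ∪ U.image (AddMonoidHom.inr A B))
      (r + r') (c + c') := by
  have hS0 := hS.zero_notMem
  have hU0 := hU.zero_notMem
  refine (hS.image_of_injective _ fun x y h ↦ congrArg Prod.fst h).union
    (hU.image_of_injective _ fun x y h ↦ congrArg Prod.snd h) ?_ ?_
  · simp only [disjoint_left, mem_image, AddMonoidHom.inl_apply, AddMonoidHom.inr_apply,
      not_exists, not_and]
    rintro _ ⟨s, hs, rfl⟩ u hu h
    obtain ⟨rfl, -⟩ := Prod.ext_iff.1 h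
    exact hS0 hs
  · simp only [mem_image, AddMonoidHom.inl_apply, AddMonoidHom.inr_apply, mem_union]
    rintro _ ⟨s, hs, rfl⟩ _ ⟨u, hu, rfl⟩ (⟨s', hs', h⟩ | ⟨u', hu', h⟩)
    · simp only [Prod.ext_iff, Prod.fst_sub, Prod.snd_sub, sub_zero, zero_sub] at h
      exact hU0 (neg_eq_zero.1 h.2.symm ▸ hu)
    · simp only [Prod.ext_iff, Prod.fst_sub, Prod.snd_sub, sub_zero] at h
      exact hS0 (h.1 ▸ hs)

lemma IsConnectionSet_s11.union_pair {X : Finset ℤ} (hX : IsConnectionSet_s11 X r c) {m : ℤ}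
    (hm0 : m ≠ 0) (hm : m ∉ X) (h2m : 2 * m ∉ X) :
    IsConnectionSet_s11 (X ∪ {m, -m}) (r + 2) (c + 3 * #{t ∈ X | m - t ∈ X}) := by
  have hX0 := hX.zero_notMem
  have hnegm : -m ∉ X := fun h ↦ hm (by simpa using hX.neg_mem h)
  have hneg2m : -(2 * m) ∉ X := fun h ↦ h2m (by simpa using hX.neg_mem h)
  have hP : -({m, -m} : Finset ℤ) = {m, -m} := by
    ext
    simp only [mem_neg', mem_insert, mem_singleton]
    omega
  have hXP : Disjoint X {m, -m} := by simp [hm, hnegm]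
  refine ⟨by simp [hX0]; omega, by rw [← image_neg_eq_neg, image_union, image_neg_eq_neg,
    image_neg_eq_neg, hX.neg_eq, hP], ?_, ?_⟩
  · rw [card_union_of_disjoint hXP, hX.card_eq, card_pair (by omega)]
  · have hPP : ∀ p ∈ ({m, -m} : Finset ℤ), ∀ q ∈ ({m, -m} : Finset ℤ), p - q ∉ X ∪ {m, -m} := by
      intro p hp q hq
      simp only [mem_insert, mem_singleton] at hp hq
      rw [mem_union, not_or, mem_insert, mem_singleton]
      refine ⟨?_, by omega⟩
      obtain h | h | h : p - q = 0 ∨ p - q = 2 * m ∨ p - q = -(2 * m) := by omega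
      all_goals rw [h]; assumption
    have hneg : diffCount {-m} X X = diffCount {m} X X := by
      rw [← diffCount_neg, neg_singleton, neg_neg, hX.neg_eq]
    rw [diffCount_union_of_neg_eq hX.neg_eq hP hXP hPP, insert_eq,
      diffCount_union_left (disjoint_singleton.2 (by omega)), hneg, diffCount_singleton_left,
      hX.diffCount_eq]
    ring

end ConnectionSet

section Circulant

variable {n r c : ℕ} {S : Finset (ZMod n)}

lemma IsConnectionSet_s11.circulant_adj (hS : IsConnectionSet_s11 S r c) {x y : ZMod n} :
    (Circulant n S).Adj x y ↔ x - y ∈ S := by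
  change x ≠ y ∧ x - y ∈ (S : Set (ZMod n)) ∪ -(S : Set (ZMod n)) ↔ _
  rw [← coe_neg, hS.neg_eq, Set.union_self, mem_coe]
  exact ⟨And.right, fun h ↦ ⟨fun hxy ↦ hS.zero_notMem (by rwa [hxy, sub_self] at h), h⟩⟩

lemma IsConnectionSet_s11.circulant_neighborSet (hS : IsConnectionSet_s11 S r c) (v : ZMod n) :
    (Circulant n S).neighborSet v = ↑(S.image (v - ·)) := by
  ext y
  simp only [SimpleGraph.mem_neighborSet, hS.circulant_adj, coe_image, Set.mem_image, mem_coe]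
  exact ⟨fun h ↦ ⟨v - y, h, sub_sub_cancel v y⟩, by rintro ⟨s, hs, rfl⟩; simpa⟩

lemma IsConnectionSet_s11.card_circulant_neighborSet (hS : IsConnectionSet_s11 S r c) (v : ZMod n) :
    Nat.card ((Circulant n S).neighborSet v) = r := by
  rw [hS.circulant_neighborSet, Nat.card_coe_set_eq, Set.ncard_coe_finset,
    card_image_of_injective _ sub_right_injective, hS.card_eq]

lemma IsConnectionSet_s11.nbhdEdgeCount_circulant (hS : IsConnectionSet_s11 S r c) (v : ZMod n) :
    nbhdEdgeCount (Circulant n S) v = c := by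
  classical
  set G := Circulant n S
  have hN : ∀ y, y ∈ G.neighborSet v ↔ v - y ∈ S := fun y ↦ hS.circulant_adj
  let H := G.induce (G.neighborSet v)
  have : Fintype (G.neighborSet v) := by rw [hS.circulant_neighborSet]; infer_instance
  have hdarts : Fintype.card H.Dart = diffCount S S S := by
    rw [← card_univ]
    refine card_bij (fun d _ ↦ (v - d.fst.1, v - d.snd.1)) (fun d _ ↦ ?_)
      (fun d _ d' _ h ↦ ?_) (fun p hp ↦ ?_)
    · have hd : d.fst.1 - d.snd.1 ∈ S := hS.circulant_adj.1 d.adj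
      simp only [mem_filter, mem_product, sub_sub_sub_cancel_left]
      exact ⟨⟨(hN _).1 d.fst.2, (hN _).1 d.snd.2⟩, by simpa using hS.neg_mem hd⟩
    · simp only [Prod.mk.injEq, sub_right_inj] at h
      exact SimpleGraph.Dart.ext _ _ (Prod.ext (Subtype.ext h.1) (Subtype.ext h.2))
    · simp only [mem_filter, mem_product] at hp
      refine ⟨⟨(⟨v - p.1, (hN _).2 (by simpa using hp.1.1)⟩,
        ⟨v - p.2, (hN _).2 (by simpa using hp.1.2)⟩), ?_⟩, mem_univ _, by simp⟩
      show G.Adj (v - p.1) (v - p.2)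
      rw [hS.circulant_adj, sub_sub_sub_cancel_left]
      simpa using hS.neg_mem hp.2
  have h2 := H.dart_card_eq_twice_card_edges
  rw [hdarts, hS.diffCount_eq, SimpleGraph.edgeFinset_card, ← Nat.card_eq_fintype_card] at h2
  change Nat.card H.edgeSet = c
  omega

end Circulant

def HasConnectionSet (n r c : ℕ) : Prop := ∃ S : Finset (ZMod n), IsConnectionSet_s11 S r c

lemma HasConnectionSet.exists_circulant {n r c : ℕ} (h : HasConnectionSet n r c) :
    ∃ S : Set (ZMod n), (∀ s ∈ S, s ≠ 0) ∧
      (∀ v : ZMod n, Nat.card ((Circulant n S).neighborSet v) = r) ∧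
      (∀ v : ZMod n, nbhdEdgeCount (Circulant n S) v = c) :=
  let ⟨S, hS⟩ := h
  ⟨S, fun _ hs h0 ↦ hS.zero_notMem (h0 ▸ hs), hS.card_circulant_neighborSet,
    hS.nbhdEdgeCount_circulant⟩

/-- The Cartesian product of two circulants of coprime orders. -/
lemma HasConnectionSet.mul {m n r c r' c' : ℕ} (hmn : m.Coprime n) (hm : HasConnectionSet m r c)
    (hn : HasConnectionSet n r' c') : HasConnectionSet (m * n) (r + r') (c + c') := by
  obtain ⟨S, hS⟩ := hm
  obtain ⟨U, hU⟩ := hn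
  let e := (ZMod.chineseRemainder hmn).symm
  exact ⟨_, (hS.prod hU).image_of_injective e.toAddEquiv.toAddMonoidHom e.injective⟩

lemma intCast_eq_zero_of_abs_lt {n : ℕ} {u : ℤ} (hu : |u| < n) (h : (u : ZMod n) = 0) : u = 0 :=
  Int.eq_zero_of_abs_lt_dvd ((ZMod.intCast_zmod_eq_zero_iff_dvd u n).1 h) hu

lemma IsConnectionSet_s11.hasConnectionSet_of_abs_lt {S : Finset ℤ} {r c n : ℕ}
    (hS : IsConnectionSet_s11 S r c) (hn : ∀ s ∈ S, 3 * |s| < n) : HasConnectionSet n r c := by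
  have hlt : ∀ s ∈ S, |s| < n := fun s hs ↦ by linarith [abs_nonneg s, hn s hs]
  refine ⟨_, hS.image (Int.castAddHom (ZMod n)) (fun x hx y hy hxy ↦ ?_) (fun x hx h ↦ ?_)
    fun x hx y hy z hz h ↦ ?_⟩
  · refine sub_eq_zero.1 (intCast_eq_zero_of_abs_lt ?_ (by simpa [sub_eq_zero] using hxy))
    linarith [abs_sub x y, hn x hx, hn y hy]
  · exact ne_of_mem_of_not_mem hx hS.zero_notMem (intCast_eq_zero_of_abs_lt (hlt x hx) h)
  · refine sub_eq_zero.1 (intCast_eq_zero_of_abs_lt ?_ (by simpa [sub_eq_zero] using h))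
    linarith [abs_sub (x - y) z, abs_sub x y, hn x hx, hn y hy, hn z hz]

lemma hasConnectionSet_three {τ : ℕ} (hτ : τ ≤ 1) : HasConnectionSet 3 (2 * τ) τ := by
  interval_cases τ
  · exact ⟨∅, isConnectionSet_empty⟩
  · exact ⟨{1, 2}, ⟨by decide, by decide, by decide, by decide⟩⟩

lemma hasConnectionSet_two {η : ℕ} (hη : η ≤ 1) : HasConnectionSet 2 η 0 := by
  interval_cases η
  · exact ⟨∅, isConnectionSet_empty⟩
  · exact ⟨{1}, ⟨by decide, by decide, by decide, by decide⟩⟩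

noncomputable def oddSet (p : ℕ) : Finset ℤ := (Icc (-p : ℤ) (p - 1)).image (2 * · + 1)

lemma mem_oddSet {p : ℕ} {x : ℤ} :
    x ∈ oddSet p ↔ ∃ k, -(p : ℤ) ≤ k ∧ k ≤ p - 1 ∧ 2 * k + 1 = x := by
  simp [oddSet, and_assoc]

lemma isConnectionSet_oddSet (p : ℕ) : IsConnectionSet_s11 (oddSet p) (2 * p) 0 where
  zero_notMem := by rw [mem_oddSet]; omega
  neg_eq := by
    ext x
    simp only [mem_neg', mem_oddSet]
    constructor <;> rintro ⟨k, hk⟩ <;> exact ⟨-k - 1, by omega⟩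
  card_eq := by
    rw [oddSet, card_image_of_injective _ fun k l h ↦ by simpa using h, Int.card_Icc]
    omega
  diffCount_eq := diffCount_eq_zero fun x hx y hy ↦ by
    rw [mem_oddSet] at *
    omega

lemma hasConnectionSet_oddSet {p n : ℕ} (hn : 6 * p ≤ n) : HasConnectionSet n (2 * p) 0 := by
  refine (isConnectionSet_oddSet p).hasConnectionSet_of_abs_lt fun s hs ↦ ?_
  obtain ⟨k, hk⟩ := mem_oddSet.1 hs
  have : |s| < 2 * p := abs_lt.2 (by omega)
  have : (6 * p : ℤ) ≤ n := by exact_mod_cast hn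
  linarith

noncomputable def symmInterval (a : ℕ) : Finset ℤ := (Icc (-a : ℤ) a).erase 0

lemma mem_symmInterval {a : ℕ} {x : ℤ} : x ∈ symmInterval a ↔ -(a : ℤ) ≤ x ∧ x ≤ a ∧ x ≠ 0 := by
  simp only [symmInterval, mem_erase, mem_Icc]
  tauto

lemma card_filter_sub_mem_symmInterval {a m : ℕ} (ham : a < m) :
    #{t ∈ symmInterval a | (m : ℤ) - t ∈ symmInterval a} = 2 * a + 1 - m := by
  have : {t ∈ symmInterval a | (m : ℤ) - t ∈ symmInterval a} = Icc ((m : ℤ) - a) a := by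
    ext t
    simp only [mem_filter, mem_symmInterval, mem_Icc]
    omega
  rw [this, Int.card_Icc]
  omega

lemma isConnectionSet_symmInterval (a : ℕ) :
    IsConnectionSet_s11 (symmInterval a) (2 * a) (3 * a.choose 2) := by
  induction a with
  | zero => simpa [symmInterval] using isConnectionSet_empty
  | succ a ih =>
    have h := ih.union_pair (m := ((a + 1 : ℕ) : ℤ)) (by omega) (by simp [mem_symmInterval])
      (by simp [mem_symmInterval]; omega)
    have hset :
        symmInterval a ∪ {((a + 1 : ℕ) : ℤ), -((a + 1 : ℕ) : ℤ)} = symmInterval (a + 1) := by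
      ext x
      simp only [mem_union, mem_symmInterval, mem_insert, mem_singleton]
      push_cast
      omega
    rw [hset, card_filter_sub_mem_symmInterval (by omega)] at h
    convert h using 1 <;> simp [Nat.choose_succ_succ', mul_add]; omega

lemma hasConnectionSet_symmInterval_union_pair {a m n : ℕ} (ham : a < m) (hmn : 3 * m < n) :
    HasConnectionSet n (2 * a + 2) (3 * (a.choose 2 + (2 * a + 1 - m))) := by
  have h := (isConnectionSet_symmInterval a).union_pair (m := m) (by omega)
    (by simp [mem_symmInterval]; omega) (by simp [mem_symmInterval]; omega)
  rw [card_filter_sub_mem_symmInterval ham, ← mul_add] at h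
  refine h.hasConnectionSet_of_abs_lt fun s hs ↦ ?_
  simp only [mem_union, mem_symmInterval, mem_insert, mem_singleton] at hs
  have : |s| ≤ m := abs_le.2 (by omega)
  have : (3 * m : ℤ) < n := by exact_mod_cast hmn
  linarith

lemma exists_hasConnectionSet {a j p τ η : ℕ} (hja : j ≤ a) (hτ : τ ≤ 1) (hη : η ≤ 1) :
    ∃ n, 1 ≤ n ∧
      HasConnectionSet n (2 * a + 2 + (2 * p + (2 * τ + η))) (3 * (a.choose 2 + j) + τ) := by
  set q := p * 6 + 1 with hq_def
  -- `N ≡ 1 (mod 6q)` is coprime to the other three moduli, and large enough for the lift from `ℤ`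
  set N := (a + 1) * (q * (3 * 2)) + 1 with hN_def
  have hq : Nat.Coprime q (3 * 2) := by
    rw [Nat.coprime_mul_right_add_left]; exact Nat.coprime_one_left _
  have hN : Nat.Coprime N (q * (3 * 2)) := by
    rw [Nat.coprime_mul_right_add_left]; exact Nat.coprime_one_left _
  have hNa : 6 * (a + 1) < N := by
    have : 6 * (a + 1) ≤ (a + 1) * (q * (3 * 2)) := by
      rw [mul_comm 6]; exact Nat.mul_le_mul_left _ (by omega)
    omega
  have hbase : HasConnectionSet N (2 * a + 2) (3 * (a.choose 2 + j)) := by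
    have h := hasConnectionSet_symmInterval_union_pair (a := a) (m := 2 * a + 1 - j) (n := N)
      (by omega) (by omega)
    rwa [show 2 * a + 1 - (2 * a + 1 - j) = j by omega] at h
  have h := hbase.mul hN ((hasConnectionSet_oddSet (p := p) (n := q) (by omega)).mul hq
    ((hasConnectionSet_three hτ).mul (by norm_num) (hasConnectionSet_two hη)))
  simp only [zero_add, add_zero] at h
  exact ⟨_, Nat.mul_pos (by omega) (by omega), h⟩

lemma exists_eq_choose_two_add (k : ℕ) :
    ∃ a j, j ≤ a ∧ k = a.choose 2 + j ∧ (j = 0 → a = 0) := by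
  induction k with
  | zero => exact ⟨0, 0, le_rfl, rfl, fun _ ↦ rfl⟩
  | succ k ih =>
    obtain ⟨a, j, hja, rfl, -⟩ := ih
    rcases hja.lt_or_eq with h | rfl
    · exact ⟨a, j + 1, h, by ring, by omega⟩
    · exact ⟨j + 1, 1, by omega, by rw [Nat.choose_succ_succ', Nat.choose_one_right]; ring,
        by omega⟩

lemma two_mul_add_two_mul_add_two_le {a j τ c r : ℕ} (hτ : τ ≤ 1) (hj : j = 0 → a = 0)
    (hc : c = 3 * (a.choose 2 + j) + τ) (hr : 6 + √((8 * (c : ℝ) - 5) / 3) ≤ r) :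
    2 * a + 2 * τ + 2 ≤ r := by
  suffices h : (2 * a + 2 * τ + 2 : ℝ) ≤ r by exact_mod_cast h
  have hsqrt := Real.sqrt_nonneg ((8 * (c : ℝ) - 5) / 3)
  rcases le_or_gt (2 * a + 2 * τ) 4 with hle | hlt
  · have : (2 * a + 2 * τ : ℝ) ≤ 4 := by exact_mod_cast hle
    linarith
  · have ha : (2 : ℝ) ≤ a := by exact_mod_cast (by omega : 2 ≤ a)
    have hj1 : (1 : ℝ) ≤ j := by exact_mod_cast (by omega : 1 ≤ j)
    have hcR : (c : ℝ) = 3 * (a * (a - 1) / 2 + j) + τ := by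
      rw [hc]; push_cast [Nat.cast_choose_two]; ring
    have : (2 * a + 2 * τ - 4 : ℝ) ≤ √((8 * (c : ℝ) - 5) / 3) := by
      apply Real.le_sqrt_of_sq_le
      rw [hcR]
      interval_cases τ <;> push_cast <;> nlinarith
    linarith

theorem exists_circulant_of_large_r_general (c r : ℕ)
    (hc : c % 3 ≠ 2)
    (hr : 6 + Real.sqrt ((8 * (c : ℝ) - 5) / 3) ≤ (r : ℝ)) :
    ∃ (n : ℕ), 1 ≤ n ∧ ∃ S : Set (ZMod n), (∀ s ∈ S, s ≠ 0) ∧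
      (∀ v : ZMod n, Nat.card ((Circulant n S).neighborSet v) = r) ∧
      (∀ v : ZMod n, nbhdEdgeCount (Circulant n S) v = c) := by
  obtain ⟨a, j, hja, hcj, hj0⟩ := exists_eq_choose_two_add (c / 3)
  have hτ : c % 3 ≤ 1 := by omega
  have hdeg := two_mul_add_two_mul_add_two_le hτ hj0 (by omega) hr
  obtain ⟨p, η, hη, rfl⟩ : ∃ p η, η ≤ 1 ∧ r = 2 * a + 2 + (2 * p + (2 * (c % 3) + η)) :=
    ⟨(r - (2 * a + 2 * (c % 3) + 2)) / 2, (r - (2 * a + 2 * (c % 3) + 2)) % 2, by omega, by omega⟩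
  obtain ⟨n, hn, h⟩ := exists_hasConnectionSet (p := p) hja hτ hη
  rw [show 3 * (a.choose 2 + j) + c % 3 = c by omega] at h
  exact ⟨n, hn, h.exists_circulant⟩

/-- For positive integers `c`, `r` with `c` not congruent to `2` modulo `3`
and `r ≥ 6 + √((8c - 5)/3)` (as real numbers), there exists an
`(r,c)`-circulant. -/
theorem exists_circulant_of_large_r (c r : ℕ) (hc0 : 1 ≤ c) (hr0 : 1 ≤ r)
    (hc : c % 3 ≠ 2)
    (hr : 6 + Real.sqrt ((8 * (c : ℝ) - 5) / 3) ≤ (r : ℝ)) :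
    ∃ (n : ℕ), 1 ≤ n ∧ ∃ S : Set (ZMod n), (∀ s ∈ S, s ≠ 0) ∧
      (∀ v : ZMod n, Nat.card ((Circulant n S).neighborSet v) = r) ∧
      (∀ v : ZMod n, nbhdEdgeCount (Circulant n S) v = c) :=
  exists_circulant_of_large_r_general c r hc hr
end

section
/- There exists no finite simple graph on a nonempty vertex set that is 3-regular and in which the subgraph induced by the open neighbourhood of every vertex has exactly 2 edges; that is, no (3,2)-constant graph exists. -/
open scoped Classical

lemma count_lemma {V : Type} (G : SimpleGraph V) (v a b c : V)
    (hab : a ≠ b) (hac : a ≠ c) (hbc : b ≠ c)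
    (hs : G.neighborSet v = {a, b, c}) :
    nbhdEdgeCount G v = (if G.Adj a b then 1 else 0) + (if G.Adj a c then 1 else 0)
      + (if G.Adj b c then 1 else 0) := by
  have ha : a ∈ G.neighborSet v := by rw [hs]; simp
  have hb : b ∈ G.neighborSet v := by rw [hs]; simp
  have hc : c ∈ G.neighborSet v := by rw [hs]; simp
  set s : Set V := G.neighborSet v with hsdef
  set a' : s := ⟨a, ha⟩
  set b' : s := ⟨b, hb⟩
  set c' : s := ⟨c, hc⟩
  have hmem : ∀ x : s, x = a' ∨ x = b' ∨ x = c' := by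
    rintro ⟨x, hx⟩
    rw [hs] at hx
    simp only [Set.mem_insert_iff, Set.mem_singleton_iff] at hx
    rcases hx with rfl | rfl | rfl
    · exact Or.inl rfl
    · exact Or.inr (Or.inl rfl)
    · exact Or.inr (Or.inr rfl)
  have hab' : a' ≠ b' := fun h => hab (congrArg Subtype.val h)
  have hac' : a' ≠ c' := fun h => hac (congrArg Subtype.val h)
  have hbc' : b' ≠ c' := fun h => hbc (congrArg Subtype.val h)
  have d12 : (s(a', b') : Sym2 s) ≠ s(a', c') := by simp [Sym2.eq_iff]; tauto
  have d13 : (s(a', b') : Sym2 s) ≠ s(b', c') := by simp [Sym2.eq_iff]; tauto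
  have d23 : (s(a', c') : Sym2 s) ≠ s(b', c') := by simp [Sym2.eq_iff]; tauto
  unfold nbhdEdgeCount
  rw [Nat.card_coe_set_eq]
  have hE : (SimpleGraph.induce s G).edgeSet =
      {e ∈ ({s(a', b'), s(a', c'), s(b', c')} : Set (Sym2 s)) |
        Sym2.lift ⟨fun (x y : s) => G.Adj x y, fun x y => by simp [G.adj_comm]⟩ e} := by
    ext e
    induction e using Sym2.ind with
    | _ x y =>
      simp only [SimpleGraph.mem_edgeSet, Set.mem_setOf_eq, Set.mem_insert_iff,
        Set.mem_singleton_iff, Sym2.lift_mk]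
      constructor
      · intro h
        refine ⟨?_, h⟩
        rcases hmem x with rfl | rfl | rfl <;> rcases hmem y with rfl | rfl | rfl <;>
          simp_all [Sym2.eq_iff]
      · exact fun h => h.2
  rw [hE]
  have hmem2 : ∀ e : Sym2 s,
      (e ∈ {e ∈ ({s(a', b'), s(a', c'), s(b', c')} : Set (Sym2 s)) |
        Sym2.lift ⟨fun (x y : s) => G.Adj x y, fun x y => by simp [G.adj_comm]⟩ e}) ↔
      ((e = s(a', b') ∧ G.Adj a b) ∨ (e = s(a', c') ∧ G.Adj a c) ∨
        (e = s(b', c') ∧ G.Adj b c)) := by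
    intro e
    simp only [Set.mem_setOf_eq, Set.mem_insert_iff, Set.mem_singleton_iff]
    constructor
    · rintro ⟨h1 | h1 | h1, h2⟩ <;> subst h1 <;> simp only [Sym2.lift_mk] at h2 <;> tauto
    · rintro (⟨rfl, h⟩ | ⟨rfl, h⟩ | ⟨rfl, h⟩) <;> simp only [Sym2.lift_mk] <;> tauto
  by_cases P : G.Adj a b <;> by_cases Q : G.Adj a c <;> by_cases R : G.Adj b c
  · rw [if_pos P, if_pos Q, if_pos R,
      show {e ∈ ({s(a', b'), s(a', c'), s(b', c')} : Set (Sym2 s)) | _} =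
        ({s(a', b'), s(a', c'), s(b', c')} : Set (Sym2 s)) from
        Set.ext fun e => by rw [hmem2]; simp [P, Q, R]]
    rw [Set.ncard_insert_of_notMem (by simp [d12, d13]),
      Set.ncard_pair d23]
  · rw [if_pos P, if_pos Q, if_neg R,
      show {e ∈ ({s(a', b'), s(a', c'), s(b', c')} : Set (Sym2 s)) | _} =
        ({s(a', b'), s(a', c')} : Set (Sym2 s)) from
        Set.ext fun e => by rw [hmem2]; simp [P, Q, R]]
    rw [Set.ncard_pair d12]
  · rw [if_pos P, if_neg Q, if_pos R,
      show {e ∈ ({s(a', b'), s(a', c'), s(b', c')} : Set (Sym2 s)) | _} =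
        ({s(a', b'), s(b', c')} : Set (Sym2 s)) from
        Set.ext fun e => by rw [hmem2]; simp [P, Q, R]]
    rw [Set.ncard_pair d13]
  · rw [if_pos P, if_neg Q, if_neg R,
      show {e ∈ ({s(a', b'), s(a', c'), s(b', c')} : Set (Sym2 s)) | _} =
        ({s(a', b')} : Set (Sym2 s)) from
        Set.ext fun e => by rw [hmem2]; simp [P, Q, R]]
    rw [Set.ncard_singleton]
  · rw [if_neg P, if_pos Q, if_pos R,
      show {e ∈ ({s(a', b'), s(a', c'), s(b', c')} : Set (Sym2 s)) | _} =
        ({s(a', c'), s(b', c')} : Set (Sym2 s)) from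
        Set.ext fun e => by rw [hmem2]; simp [P, Q, R]]
    rw [Set.ncard_pair d23]
  · rw [if_neg P, if_pos Q, if_neg R,
      show {e ∈ ({s(a', b'), s(a', c'), s(b', c')} : Set (Sym2 s)) | _} =
        ({s(a', c')} : Set (Sym2 s)) from
        Set.ext fun e => by rw [hmem2]; simp [P, Q, R]]
    rw [Set.ncard_singleton]
  · rw [if_neg P, if_neg Q, if_pos R,
      show {e ∈ ({s(a', b'), s(a', c'), s(b', c')} : Set (Sym2 s)) | _} =
        ({s(b', c')} : Set (Sym2 s)) from
        Set.ext fun e => by rw [hmem2]; simp [P, Q, R]]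
    rw [Set.ncard_singleton]
  · rw [if_neg P, if_neg Q, if_neg R,
      show {e ∈ ({s(a', b'), s(a', c'), s(b', c')} : Set (Sym2 s)) | _} =
        (∅ : Set (Sym2 s)) from
        Set.ext fun e => by rw [hmem2]; simp [P, Q, R]]
    rw [Set.ncard_empty]


lemma third_elt {V : Type} {s : Set V} {p q : V} (h3 : s.ncard = 3)
    (hp : p ∈ s) (hq : q ∈ s) (hpq : p ≠ q) :
    ∃ x, x ≠ p ∧ x ≠ q ∧ s = {p, q, x} := by
  have hfin : s.Finite := Set.finite_of_ncard_ne_zero (by omega)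
  have hsub : ({p, q} : Set V) ⊆ s := by
    intro w hw
    simp only [Set.mem_insert_iff, Set.mem_singleton_iff] at hw
    rcases hw with rfl | rfl <;> assumption
  have hd : (s \ {p, q}).ncard = 1 := by
    rw [Set.ncard_diff hsub, h3, Set.ncard_pair hpq]
  obtain ⟨x, hx⟩ := Set.ncard_eq_one.mp hd
  have hxm : x ∈ s \ ({p, q} : Set V) := hx ▸ rfl
  simp only [Set.mem_diff, Set.mem_insert_iff, Set.mem_singleton_iff, not_or] at hxm
  refine ⟨x, hxm.2.1, hxm.2.2, ?_⟩
  rw [← Set.union_diff_cancel hsub, hx]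
  ext w
  simp only [Set.mem_union, Set.mem_insert_iff, Set.mem_singleton_iff]
  tauto

lemma eq_of_three {V : Type} [Fintype V] {s : Set V} {x y z : V} (h3 : s.ncard = 3)
    (hx : x ∈ s) (hy : y ∈ s) (hz : z ∈ s) (hxy : x ≠ y) (hxz : x ≠ z) (hyz : y ≠ z) :
    s = {x, y, z} := by
  refine (Set.eq_of_subset_of_ncard_le ?_ ?_ (Set.toFinite s)).symm
  · intro w hw
    simp only [Set.mem_insert_iff, Set.mem_singleton_iff] at hw
    rcases hw with rfl | rfl | rfl <;> assumption
  · rw [h3]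
    exact le_of_eq (Set.ncard_eq_three.mpr ⟨x, y, z, hxy, hxz, hyz, rfl⟩).symm

lemma main_step {V : Type} [Fintype V] (G : SimpleGraph V)
    (hcard : ∀ w : V, (G.neighborSet w).ncard = 3)
    (hcnt : ∀ w : V, nbhdEdgeCount G w = 2)
    (v p u r : V) (hpu : p ≠ u) (hpr : p ≠ r) (hur : u ≠ r)
    (hs : G.neighborSet v = {p, u, r})
    (h1 : G.Adj p u) (h2 : G.Adj u r) (h3 : ¬ G.Adj p r) : False := by
  have hvp : G.Adj v p := by have : p ∈ G.neighborSet v := by rw [hs]; simp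
                             exact this
  have hvu : G.Adj v u := by have : u ∈ G.neighborSet v := by rw [hs]; simp
                             exact this
  have hvr : G.Adj v r := by have : r ∈ G.neighborSet v := by rw [hs]; simp
                             exact this
  have hvp' : v ≠ p := G.ne_of_adj hvp
  have hvu' : v ≠ u := G.ne_of_adj hvu
  have hvr' : v ≠ r := G.ne_of_adj hvr
  -- N(u) = {v, p, r}
  have hNu : G.neighborSet u = {v, p, r} :=
    eq_of_three (hcard u) hvu.symm h1.symm h2 hvp' (fun h => hvr' h) hpr
  -- third neighbor x of p
  obtain ⟨x, hxv, hxu, hNp⟩ := third_elt (hcard p) (by exact hvp.symm : v ∈ G.neighborSet p)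
    (by exact h1 : u ∈ G.neighborSet p) hvu'
  have hpx : G.Adj p x := by
    have : x ∈ G.neighborSet p := by rw [hNp]; simp
    exact this
  have hxp : x ≠ p := fun h => G.irrefl (h ▸ hpx)
  have hxr : x ≠ r := fun h => h3 (h ▸ hpx)
  -- v not adjacent to x
  have hnvx : ¬ G.Adj v x := by
    intro h
    have : x ∈ G.neighborSet v := h
    rw [hs] at this
    simp only [Set.mem_insert_iff, Set.mem_singleton_iff] at this
    rcases this with rfl | rfl | rfl
    · exact hxp rfl
    · exact hxu rfl
    · exact hxr rfl
  have hsum := count_lemma G p v u x hvu' hxv.symm hxu.symm hNp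
  rw [hcnt p, if_pos hvu, if_neg hnvx] at hsum
  have hux : G.Adj u x := by by_contra h; rw [if_neg h] at hsum; omega
  have : x ∈ G.neighborSet u := hux
  rw [hNu] at this
  simp only [Set.mem_insert_iff, Set.mem_singleton_iff] at this
  rcases this with rfl | rfl | rfl
  · exact hxv rfl
  · exact hxp rfl
  · exact hxr rfl

/-- No (3,2)-constant graph exists: there is no finite simple graph on a
nonempty vertex set that is 3-regular and in which the subgraph induced by
the open neighbourhood of every vertex has exactly 2 edges. -/
theorem no_three_two_constant_graph :
    ¬ ∃ (V : Type) (_ : Fintype V) (_ : Nonempty V) (G : SimpleGraph V),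
      (∀ v : V, Nat.card (G.neighborSet v) = 3) ∧
      (∀ v : V, nbhdEdgeCount G v = 2) := by
  rintro ⟨V, _, ⟨v⟩, G, hreg, hcnt⟩
  have hcard : ∀ w : V, (G.neighborSet w).ncard = 3 := fun w => by
    rw [← Nat.card_coe_set_eq]; exact hreg w
  obtain ⟨a, b, c, hab, hac, hbc, hs⟩ := Set.ncard_eq_three.mp (hcard v)
  have hsum := count_lemma G v a b c hab hac hbc hs
  rw [hcnt v] at hsum
  by_cases P : G.Adj a b <;> by_cases Q : G.Adj a c <;> by_cases R : G.Adj b c <;>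
    simp only [P, Q, R, if_pos, if_neg, not_false_iff, if_true, if_false] at hsum
  · omega
  · -- edges ab, ac; center a
    refine main_step G hcard hcnt v b a c (Ne.symm hab) hbc hac ?_ P.symm Q R
    rw [hs]; ext w; simp; tauto
  · -- edges ab, bc; center b
    exact main_step G hcard hcnt v a b c hab hac hbc hs P R Q
  · omega
  · -- edges ac, bc; center c
    refine main_step G hcard hcnt v a c b hac hab (Ne.symm hbc) ?_ Q R.symm P
    rw [hs]; ext w; simp; tauto
  · omega
  · omega
  · omega
end

section
/- There exists no finite simple graph on a nonempty vertex set that is 4-regular and in which the subgraph induced by the open neighbourhood of every vertex has exactly 5 edges; that is, no (4,5)-constant graph exists. -/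
open Finset

namespace SimpleGraph

theorem exists_forall_not_adj_eq_of_card_edgeFinset_add_one {W : Type*} [Fintype W]
    [DecidableEq W] {H : SimpleGraph W} [DecidableRel H.Adj]
    (h : #H.edgeFinset + 1 = (Fintype.card W).choose 2) :
    ∃ x y, x ≠ y ∧ ¬H.Adj x y ∧ ∀ z w, z ≠ w → ¬H.Adj z w → s(z, w) = s(x, y) := by
  have hcard : #((⊤ : SimpleGraph W).edgeFinset \ H.edgeFinset) = 1 := by
    rw [card_sdiff_of_subset (edgeFinset_mono le_top), card_edgeFinset_top_eq_card_choose_two]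
    omega
  obtain ⟨e, he⟩ := card_eq_one.mp hcard
  induction e using Sym2.ind with | _ x y => ?_
  have hxy : s(x, y) ∈ (⊤ : SimpleGraph W).edgeFinset \ H.edgeFinset := he ▸ mem_singleton_self _
  simp only [mem_sdiff, mem_edgeFinset, mem_edgeSet, top_adj] at hxy
  refine ⟨x, y, hxy.1, hxy.2, fun z w hzw hnzw => ?_⟩
  have hzw' : s(z, w) ∈ (⊤ : SimpleGraph W).edgeFinset \ H.edgeFinset := by simp [hzw, hnzw]
  rwa [he, mem_singleton] at hzw'

variable {V : Type*} {G : SimpleGraph V}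

def IsConstant (G : SimpleGraph V) (r c : ℕ) : Prop :=
  (∀ v, Nat.card (G.neighborSet v) = r) ∧ ∀ v, nbhdEdgeCount G v = c

variable [G.LocallyFinite] {v : V}

theorem IsConstant.degree_eq {r c : ℕ} (hG : G.IsConstant r c) (v : V) : G.degree v = r := by
  rw [← card_neighborSet_eq_degree, ← Nat.card_eq_fintype_card, hG.1 v]

theorem exists_nonadj_pair_of_nbhdEdgeCount_add_one
    (h : nbhdEdgeCount G v + 1 = (G.degree v).choose 2) :
    ∃ c d, G.Adj v c ∧ G.Adj v d ∧ c ≠ d ∧ ¬G.Adj c d ∧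
      ∀ y z, G.Adj v y → G.Adj v z → y ≠ z → y ≠ c → y ≠ d → G.Adj y z := by
  classical
  have hH : #(G.induce (G.neighborSet v)).edgeFinset + 1
      = (Fintype.card (G.neighborSet v)).choose 2 := by
    rwa [card_neighborSet_eq_degree, edgeFinset_card, ← Nat.card_eq_fintype_card]
  obtain ⟨⟨c, hc⟩, ⟨d, hd⟩, hcd, hncd, hpair⟩ :=
    exists_forall_not_adj_eq_of_card_edgeFinset_add_one hH
  refine ⟨c, d, hc, hd, by simpa using hcd, hncd,
    fun y z hy hz hyz hyc hyd => by_contra fun hnyz => ?_⟩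
  have := hpair ⟨y, hy⟩ ⟨z, hz⟩ (Subtype.coe_ne_coe.1 hyz) hnyz
  simp only [Sym2.eq_iff, Subtype.ext_iff] at this
  rcases this with ⟨rfl, -⟩ | ⟨rfl, -⟩
  exacts [hyc rfl, hyd rfl]

theorem exists_adj_of_nbhdEdgeCount_add_one
    (h : nbhdEdgeCount G v + 1 = (G.degree v).choose 2) (h3 : 3 ≤ G.degree v) {y : V}
    (hy : G.Adj v y) : ∃ w, G.Adj v w ∧ G.Adj y w := by
  classical
  obtain ⟨c, d, hc, hd, hcd, -, hfull⟩ := exists_nonadj_pair_of_nbhdEdgeCount_add_one h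
  obtain ⟨u, hu⟩ : (G.neighborFinset v \ {c, d}).Nonempty := by
    rw [← card_pos, card_sdiff_of_subset (by simp [insert_subset_iff, hc, hd]),
      card_neighborFinset_eq_degree, card_pair hcd]
    omega
  simp only [mem_sdiff, mem_neighborFinset, mem_insert, mem_singleton, not_or] at hu
  obtain ⟨hu, huc, hud⟩ := hu
  by_cases hycd : y = c ∨ y = d
  · have huy : u ≠ y := by rintro rfl; exact hycd.elim huc hud
    exact ⟨u, hu, (hfull u y hu hy huy huc hud).symm⟩
  · obtain ⟨hyc, hyd⟩ := not_or.1 hycd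
    exact ⟨c, hc, hfull y c hy hc hyc hyc hyd⟩

theorem neighborFinset_subset_insert_of_forall_adj [DecidableEq V] {y : V} (hvy : G.Adj v y)
    (hdeg : G.degree y ≤ G.degree v) (hy : ∀ z, G.Adj v z → z ≠ y → G.Adj y z) :
    G.neighborFinset y ⊆ insert v (G.neighborFinset v) := by
  have hsub : insert v ((G.neighborFinset v).erase y) ⊆ G.neighborFinset y := by
    intro z hz
    simp only [mem_insert, mem_erase, mem_neighborFinset] at hz ⊢
    rcases hz with rfl | ⟨hzy, hvz⟩
    exacts [hvy.symm, hy z hvz hzy]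
  have hcard : #(insert v ((G.neighborFinset v).erase y)) = G.degree v := by
    rw [card_insert_of_notMem (by simp), card_erase_of_mem (by simpa using hvy),
      card_neighborFinset_eq_degree]
    have := G.degree_pos_iff_exists_adj v |>.mpr ⟨y, hvy⟩
    omega
  rw [← eq_of_subset_of_card_le hsub (by rw [hcard, card_neighborFinset_eq_degree]; exact hdeg)]
  exact insert_subset_insert _ (erase_subset _ _)

theorem exists_neighborFinset_eq_insert [DecidableEq V] {c : V} {T : Finset V}
    (hT : T ⊆ G.neighborFinset c) (hcard : #T + 1 = G.degree c) :
    ∃ x, G.Adj c x ∧ x ∉ T ∧ G.neighborFinset c = insert x T := by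
  obtain ⟨x, hcx, hxT⟩ := exists_mem_notMem_of_card_lt_card (s := T) (t := G.neighborFinset c)
    (by rw [card_neighborFinset_eq_degree]; omega)
  refine ⟨x, (mem_neighborFinset ..).1 hcx, hxT,
    (eq_of_subset_of_card_le (insert_subset hcx hT) ?_).symm⟩
  rw [card_insert_of_notMem hxT, card_neighborFinset_eq_degree, hcard]

theorem IsConstant.nbhdEdgeCount_add_one {r : ℕ} (hG : G.IsConstant r (r.choose 2 - 1))
    (hr : 2 ≤ r) (v : V) : nbhdEdgeCount G v + 1 = (G.degree v).choose 2 := by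
  rw [hG.2, hG.degree_eq]
  exact Nat.sub_add_cancel (Nat.choose_pos hr)

theorem not_isConstant_choose_two_sub_one [Nonempty V] {r : ℕ} (hr : 3 ≤ r) :
    ¬G.IsConstant r (r.choose 2 - 1) := by
  classical
  intro hG
  have hmiss := hG.nbhdEdgeCount_add_one (by omega)
  obtain ⟨v⟩ := ‹Nonempty V›
  obtain ⟨c, d, hc, hd, hcd, hncd, hfull⟩ := exists_nonadj_pair_of_nbhdEdgeCount_add_one (hmiss v)
  set S := insert v (G.neighborFinset v)
  set T := S \ {c, d}
  have hT (w : V) : w ∈ T ↔ (w = v ∨ G.Adj v w) ∧ w ≠ c ∧ w ≠ d := by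
    simp [T, S, not_or]
  have htwin (w : V) (hw : w ∈ T) : G.neighborFinset w ⊆ S := by
    obtain ⟨rfl | hvw, hwc, hwd⟩ := (hT w).1 hw
    · exact subset_insert _ _
    · exact neighborFinset_subset_insert_of_forall_adj hvw (by rw [hG.degree_eq, hG.degree_eq])
        fun z hz hzw => hfull w z hvw hz hzw.symm hwc hwd
  have hTc : T ⊆ G.neighborFinset c := by
    intro w hw
    obtain ⟨rfl | hvw, hwc, hwd⟩ := (hT w).1 hw
    · simpa using hc.symm
    · simpa using (hfull w c hvw hc hwc hwc hwd).symm
  have hTcard : #T + 1 = G.degree c := by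
    rw [card_sdiff_of_subset (by simp [S, insert_subset_iff, hc, hd]), card_insert_of_notMem
      (by simp), card_neighborFinset_eq_degree, hG.degree_eq, hG.degree_eq, card_pair hcd]
    omega
  obtain ⟨x, hcx, hxT, hNc⟩ := exists_neighborFinset_eq_insert hTc hTcard
  have hxS : x ∉ S := fun hxS => hxT <| by
    simp only [T, mem_sdiff, hxS, mem_insert, mem_singleton, not_or, true_and]
    exact ⟨fun h => G.irrefl (h ▸ hcx), fun h => hncd (h ▸ hcx)⟩
  obtain ⟨w, hcw, hxw⟩ := exists_adj_of_nbhdEdgeCount_add_one (hmiss c) (by rwa [hG.degree_eq]) hcx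
  rw [← mem_neighborFinset, hNc, mem_insert] at hcw
  rcases hcw with rfl | hwT
  · exact G.irrefl hxw
  · exact hxS (htwin w hwT (by simpa using hxw.symm))

end SimpleGraph

/-- No (4,5)-constant graph exists: there is no finite simple graph on a
nonempty vertex set that is 4-regular and in which the subgraph induced by
the open neighbourhood of every vertex has exactly 5 edges. -/
theorem no_four_five_constant_graph :
    ¬ ∃ (V : Type) (_ : Fintype V) (_ : Nonempty V) (G : SimpleGraph V),
      (∀ v : V, Nat.card (G.neighborSet v) = 4) ∧
      (∀ v : V, nbhdEdgeCount G v = 5) := by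
  rintro ⟨V, _, _, G, hG⟩
  classical
  exact SimpleGraph.not_isConstant_choose_two_sub_one (G := G) (r := 4) (by norm_num) hG
end

section
/- There exists no finite simple graph on a nonempty vertex set that is 5-regular and in which the subgraph induced by the open neighbourhood of every vertex has exactly 9 edges; that is, no (5,9)-constant graph exists. -/
open Finset

namespace SimpleGraph

variable {V : Type*} [Fintype V] [DecidableEq V] (G : SimpleGraph V) [DecidableRel G.Adj]

theorem sum_card_neighborFinset_inter_eq_two_mul_nbhdEdgeCount (v : V) :
    ∑ w ∈ G.neighborFinset v, #(G.neighborFinset w ∩ G.neighborFinset v) =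
      2 * nbhdEdgeCount G v := by
  have hdeg (w : G.neighborSet v) :
      (G.induce (G.neighborSet v)).degree w = #(G.neighborFinset w ∩ G.neighborFinset v) := by
    rw [← card_neighborFinset_eq_degree, ← card_map, map_neighborFinset_induce,
      neighborFinset_def]
    congr!
  rw [nbhdEdgeCount, Nat.card_eq_fintype_card, ← edgeFinset_card,
    ← sum_degrees_eq_twice_card_edges, ← sum_coe_sort]
  exact Fintype.sum_equiv (Equiv.subtypeEquivRight fun x => mem_neighborFinset G v x)
    _ _ fun w => (hdeg ⟨w, (mem_neighborFinset G v w).1 w.2⟩).symm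

/-- The neighbours of `v` that are not adjacent to all other neighbours of `v`, i.e. the
non-dominating vertices of the subgraph induced by `N(v)`. -/
def deficientNeighborFinset (v : V) : Finset V :=
  {w ∈ G.neighborFinset v | #(G.neighborFinset w ∩ G.neighborFinset v) + 2 ≤ G.degree v}

variable {G} {v w : V}

theorem mem_deficientNeighborFinset :
    w ∈ G.deficientNeighborFinset v ↔
      G.Adj v w ∧ #(G.neighborFinset w ∩ G.neighborFinset v) + 2 ≤ G.degree v := by
  rw [deficientNeighborFinset, mem_filter, mem_neighborFinset]

theorem Adj.card_neighborFinset_inter_lt_degree (h : G.Adj v w) :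
    #(G.neighborFinset w ∩ G.neighborFinset v) < G.degree v := by
  refine card_lt_card ⟨inter_subset_right, fun hsub => G.irrefl (v := w) ?_⟩
  exact (mem_neighborFinset ..).1 (mem_inter.1 (hsub ((mem_neighborFinset ..).2 h))).1

theorem Adj.card_neighborFinset_inter_add_one_eq (h : G.Adj v w)
    (hw : w ∉ G.deficientNeighborFinset v) :
    #(G.neighborFinset w ∩ G.neighborFinset v) + 1 = G.degree v := by
  have hlt := h.card_neighborFinset_inter_lt_degree
  have hle : ¬ #(G.neighborFinset w ∩ G.neighborFinset v) + 2 ≤ G.degree v :=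
    fun hle => hw (mem_deficientNeighborFinset.2 ⟨h, hle⟩)
  omega

theorem Adj.insert_inter_neighborFinset_eq (h : G.Adj v w)
    (hvw : #(G.neighborFinset v ∩ G.neighborFinset w) + 1 = G.degree v) :
    insert w (G.neighborFinset v ∩ G.neighborFinset w) = G.neighborFinset v := by
  have hw : w ∉ G.neighborFinset v ∩ G.neighborFinset w := by simp
  exact eq_of_subset_of_card_le (insert_subset (by simpa using h) inter_subset_left)
    (by rw [card_insert_of_notMem hw, hvw, card_neighborFinset_eq_degree])

theorem Adj.insert_neighborFinset_eq (h : G.Adj v w) (hdeg : G.degree v = G.degree w)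
    (hvw : #(G.neighborFinset v ∩ G.neighborFinset w) + 1 = G.degree v) :
    insert v (G.neighborFinset v) = insert w (G.neighborFinset w) := by
  conv_lhs => rw [← h.insert_inter_neighborFinset_eq hvw]
  conv_rhs => rw [← h.symm.insert_inter_neighborFinset_eq (by rwa [inter_comm, ← hdeg])]
  rw [insert_comm, inter_comm]

/-- Every local graph `G[N(v)]` has `d` vertices and `d(d-1)/2 - 1` edges, i.e. it is the
complete graph `K_d` minus one edge. -/
def IsLocallyCompleteMinusEdge (G : SimpleGraph V) [DecidableRel G.Adj] (d : ℕ) : Prop :=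
  G.IsRegularOfDegree d ∧ ∀ v, 2 * nbhdEdgeCount G v + 2 = d * (d - 1)

namespace IsLocallyCompleteMinusEdge

variable {d : ℕ} {p : V}

theorem insert_neighborFinset_eq_of_notMem_deficientNeighborFinset
    (hG : G.IsLocallyCompleteMinusEdge d) (hw : G.Adj v w)
    (hwv : w ∉ G.deficientNeighborFinset v) :
    insert v (G.neighborFinset v) = insert w (G.neighborFinset w) := by
  refine hw.insert_neighborFinset_eq (by rw [hG.1.degree_eq, hG.1.degree_eq]) ?_
  rw [inter_comm, hw.card_neighborFinset_inter_add_one_eq hwv]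

theorem card_deficientNeighborFinset_le_two (hG : G.IsLocallyCompleteMinusEdge d) (v : V) :
    #(G.deficientNeighborFinset v) ≤ 2 := by
  have hle : ∑ w ∈ G.neighborFinset v, (#(G.neighborFinset w ∩ G.neighborFinset v) +
      if #(G.neighborFinset w ∩ G.neighborFinset v) + 2 ≤ G.degree v then 1 else 0) ≤
      ∑ w ∈ G.neighborFinset v, (d - 1) := by
    refine sum_le_sum fun w hw => ?_
    have := ((mem_neighborFinset ..).1 hw).card_neighborFinset_inter_lt_degree
    rw [hG.1.degree_eq] at this ⊢
    split_ifs <;> omega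
  rw [sum_add_distrib, sum_boole, sum_const, card_neighborFinset_eq_degree, hG.1.degree_eq,
    smul_eq_mul, ← hG.2 v, ← sum_card_neighborFinset_inter_eq_two_mul_nbhdEdgeCount] at hle
  simpa [deficientNeighborFinset, hG.1.degree_eq] using hle

theorem deficientNeighborFinset_nonempty (hG : G.IsLocallyCompleteMinusEdge d) (v : V) :
    (G.deficientNeighborFinset v).Nonempty := by
  by_contra hempty
  have hfull :
      ∀ w ∈ G.neighborFinset v, #(G.neighborFinset w ∩ G.neighborFinset v) = d - 1 := by
    intro w hw
    have := ((mem_neighborFinset ..).1 hw).card_neighborFinset_inter_add_one_eq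
      fun h => hempty ⟨w, h⟩
    rw [hG.1.degree_eq] at this
    omega
  have hsum := hG.2 v
  rw [← sum_card_neighborFinset_inter_eq_two_mul_nbhdEdgeCount, sum_congr rfl hfull, sum_const,
    card_neighborFinset_eq_degree, hG.1.degree_eq, smul_eq_mul] at hsum
  omega

theorem le_card_neighborFinset_inter_add_two (hG : G.IsLocallyCompleteMinusEdge d)
    (hw : G.Adj v w) : d ≤ #(G.neighborFinset w ∩ G.neighborFinset v) + 2 := by
  by_cases hwv : w ∈ G.deficientNeighborFinset v
  · -- every non-deficient neighbour of `v` is a closed twin of `v`, hence adjacent to `w`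
    have hsub : G.neighborFinset v \ G.deficientNeighborFinset v ⊆
        G.neighborFinset w ∩ G.neighborFinset v := by
      intro x hx
      obtain ⟨hxv, hxD⟩ := mem_sdiff.1 hx
      have hwx : w ≠ x := by rintro rfl; exact hxD hwv
      have hwNx : w ∈ insert x (G.neighborFinset x) :=
        hG.insert_neighborFinset_eq_of_notMem_deficientNeighborFinset
          ((mem_neighborFinset ..).1 hxv) hxD ▸ mem_insert_of_mem ((mem_neighborFinset ..).2 hw)
      rw [mem_insert, mem_neighborFinset, or_iff_right hwx] at hwNx
      exact mem_inter.2 ⟨(mem_neighborFinset ..).2 hwNx.symm, hxv⟩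
    have := card_le_card hsub
    have := card_le_card_sdiff_add_card (s := G.neighborFinset v)
      (t := G.deficientNeighborFinset v)
    have := hG.card_deficientNeighborFinset_le_two v
    rw [card_neighborFinset_eq_degree, hG.1.degree_eq] at *
    omega
  · have := hw.card_neighborFinset_inter_add_one_eq hwv
    rw [hG.1.degree_eq] at this
    omega

theorem card_neighborFinset_inter_add_two_eq (hG : G.IsLocallyCompleteMinusEdge d)
    (hp : p ∈ G.deficientNeighborFinset v) :
    #(G.neighborFinset p ∩ G.neighborFinset v) + 2 = d := by
  obtain ⟨hvp, hle⟩ := mem_deficientNeighborFinset.1 hp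
  rw [hG.1.degree_eq] at hle
  exact le_antisymm hle (hG.le_card_neighborFinset_inter_add_two hvp)

theorem insert_inter_subset_deficientNeighborFinset (hG : G.IsLocallyCompleteMinusEdge d)
    (hp : p ∈ G.deficientNeighborFinset v) :
    insert p (G.neighborFinset p ∩ G.neighborFinset v) ⊆ G.deficientNeighborFinset v := by
  set R := G.neighborFinset p ∩ G.neighborFinset v
  have hR : #R + 2 = d := hG.card_neighborFinset_inter_add_two_eq hp
  have hvp := (mem_deficientNeighborFinset.1 hp).1
  have hvR : v ∉ R := by simp [R]
  have hsub : insert v R ⊆ G.neighborFinset p :=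
    insert_subset ((mem_neighborFinset ..).2 hvp.symm) inter_subset_left
  obtain ⟨w, hwp, hwR⟩ := exists_mem_notMem_of_card_lt_card (s := insert v R)
    (t := G.neighborFinset p) (by
      rw [card_insert_of_notMem hvR, card_neighborFinset_eq_degree, hG.1.degree_eq]; omega)
  have hNp : insert w (insert v R) = G.neighborFinset p :=
    eq_of_subset_of_card_le (insert_subset hwp hsub) (by
      rw [card_insert_of_notMem hwR, card_insert_of_notMem hvR, card_neighborFinset_eq_degree,
        hG.1.degree_eq]; omega)
  obtain ⟨hwv, hwNv⟩ : w ≠ v ∧ w ∉ G.neighborFinset v := by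
    simpa [R, (mem_neighborFinset ..).1 hwp] using hwR
  -- `p` and `w` have at least `d - 2` common neighbours, and they can only lie in `R`
  have hRw : R ⊆ G.neighborFinset w := by
    have hwpR : G.neighborFinset w ∩ G.neighborFinset p ⊆ R := by
      intro z hz
      obtain ⟨hzw, hzp⟩ := mem_inter.1 hz
      rw [← hNp, mem_insert, mem_insert] at hzp
      rcases hzp with rfl | rfl | hzR
      · exact absurd hzw (by simp)
      · exact absurd ((mem_neighborFinset ..).2 ((mem_neighborFinset ..).1 hzw).symm) hwNv
      · exact hzR
    have := hG.le_card_neighborFinset_inter_add_two ((mem_neighborFinset ..).1 hwp)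
    rw [← eq_of_subset_of_card_le hwpR (by omega)]
    exact inter_subset_left
  refine insert_subset hp fun r hr => ?_
  by_contra hrD
  have hwr : G.Adj r w := (mem_neighborFinset ..).1 (hRw hr) |>.symm
  have hw : w ∈ insert v (G.neighborFinset v) :=
    hG.insert_neighborFinset_eq_of_notMem_deficientNeighborFinset
      ((mem_neighborFinset ..).1 (mem_inter.1 hr).2) hrD ▸
        mem_insert_of_mem ((mem_neighborFinset ..).2 hwr)
  simp [hwv, hwNv] at hw

theorem isEmpty (hG : G.IsLocallyCompleteMinusEdge d) (hd : 4 ≤ d) : IsEmpty V := by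
  refine ⟨fun v => ?_⟩
  obtain ⟨p, hp⟩ := hG.deficientNeighborFinset_nonempty v
  have hcard := card_le_card (hG.insert_inter_subset_deficientNeighborFinset hp)
  have hpR : p ∉ G.neighborFinset p ∩ G.neighborFinset v := by simp
  have := hG.card_neighborFinset_inter_add_two_eq hp
  have := hG.card_deficientNeighborFinset_le_two v
  rw [card_insert_of_notMem hpR] at hcard
  omega

end IsLocallyCompleteMinusEdge

end SimpleGraph

/-- No (5,9)-constant graph exists: there is no finite simple graph on a
nonempty vertex set that is 5-regular and in which the subgraph induced by
the open neighbourhood of every vertex has exactly 9 edges. -/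
theorem no_five_nine_constant_graph :
    ¬ ∃ (V : Type) (_ : Fintype V) (_ : Nonempty V) (G : SimpleGraph V),
      (∀ v : V, Nat.card (G.neighborSet v) = 5) ∧
      (∀ v : V, nbhdEdgeCount G v = 9) := by
  rintro ⟨V, _, ⟨v⟩, G, hdeg, hedge⟩
  classical
  have hG : G.IsLocallyCompleteMinusEdge 5 :=
    ⟨fun v => by rw [← G.card_neighborSet_eq_degree, ← Nat.card_eq_fintype_card, hdeg],
      fun v => by rw [hedge]⟩
  exact (hG.isEmpty (by norm_num)).false v
end

section
/- For c ∈ {13, 14}, there exists no finite simple graph on a nonempty vertex set that is 6-regular and in which the subgraph induced by the open neighbourhood of every vertex has exactly c edges; that is, neither a (6,13)-constant graph nor a (6,14)-constant graph exists. -/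
open Finset SimpleGraph

namespace SimpleGraph

variable {V : Type*} [Fintype V] [DecidableEq V] {G : SimpleGraph V} [DecidableRel G.Adj]
  {r : ℕ} {u v w : V}

variable (G) in
theorem two_mul_nbhdEdgeCount_s16 (v : V) :
    2 * nbhdEdgeCount G v =
      ∑ w ∈ G.neighborFinset v, #(G.neighborFinset v ∩ G.neighborFinset w) := by
  classical
  let H := G.induce (G.neighborSet v)
  have hdeg (a : G.neighborSet v) :
      H.degree a = #(G.neighborFinset v ∩ G.neighborFinset a) := by
    rw [← card_neighborSet_eq_degree, ← Set.toFinset_card]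
    refine card_bij (fun b _ => b.1) (fun b hb => ?_) (fun _ _ _ _ => Subtype.ext)
      (fun z hz => ?_)
    · simp only [Set.mem_toFinset, mem_neighborSet, H, comap_adj] at hb
      simpa using ⟨b.2, hb⟩
    · simp only [mem_inter, mem_neighborFinset] at hz
      exact ⟨⟨z, hz.1⟩, by simpa [H] using hz.2, rfl⟩
  rw [nbhdEdgeCount, Nat.card_eq_fintype_card, ← edgeFinset_card,
    ← sum_degrees_eq_twice_card_edges, sum_subtype (G.neighborFinset v)
      (fun x => G.mem_neighborFinset v x) (fun w => #(G.neighborFinset v ∩ G.neighborFinset w))]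
  exact sum_congr rfl fun a _ => hdeg a

theorem card_inter_neighborFinset_add_two_le (hvw : G.Adj v w) (hvu : G.Adj v u) (hwu : w ≠ u)
    (huw : ¬G.Adj w u) : #(G.neighborFinset v ∩ G.neighborFinset w) + 2 ≤ G.degree v := by
  have hsub : insert w (insert u (G.neighborFinset v ∩ G.neighborFinset w)) ⊆
      G.neighborFinset v :=
    insert_subset (by simpa) (insert_subset (by simpa) inter_subset_left)
  have := card_le_card hsub
  rwa [card_insert_of_notMem (by simp [hwu]), card_insert_of_notMem (by simp [huw]),
    card_neighborFinset_eq_degree] at this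

theorem Adj.card_inter_neighborFinset_lt (h : G.Adj v w) :
    #(G.neighborFinset v ∩ G.neighborFinset w) < G.degree v := by
  rw [← card_neighborFinset_eq_degree]
  refine (card_le_card fun z hz => ?_).trans_lt (card_erase_lt_of_mem (a := w) (by simpa))
  simp only [mem_inter, mem_neighborFinset, mem_erase] at hz ⊢
  exact ⟨hz.2.ne', hz.1⟩

theorem Adj.neighborFinset_subset_insert (h : G.Adj v w)
    (hdeg : G.degree w ≤ #(G.neighborFinset v ∩ G.neighborFinset w) + 1) :
    G.neighborFinset w ⊆ insert v (G.neighborFinset v) := by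
  have hsub : insert v (G.neighborFinset v ∩ G.neighborFinset w) ⊆ G.neighborFinset w :=
    insert_subset (by simpa using h.symm) inter_subset_right
  rw [← eq_of_subset_of_card_le hsub (by simpa [card_insert_of_notMem] using hdeg)]
  exact insert_subset_insert _ inter_subset_left

theorem _root_.Finset.sum_add_card_le_card_mul {ι : Type*} [DecidableEq ι] {s t : Finset ι}
    {g : ι → ℕ} {m : ℕ} (hts : t ⊆ s) (hs : ∀ i ∈ s, g i ≤ m) (ht : ∀ i ∈ t, g i < m) :
    ∑ i ∈ s, g i + #t ≤ #s * m :=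
  calc ∑ i ∈ s, g i + #t = ∑ i ∈ s \ t, g i + ∑ i ∈ t, (g i + 1) := by
        rw [← sum_sdiff hts, sum_add_distrib, card_eq_sum_ones]; ring
    _ ≤ ∑ _i ∈ s \ t, m + ∑ _i ∈ t, m :=
        add_le_add (sum_le_sum fun i hi => hs i (mem_sdiff.1 hi).1) (sum_le_sum ht)
    _ = #s * m := by
        rw [sum_const, sum_const, smul_eq_mul, smul_eq_mul, ← add_mul,
          card_sdiff_add_card_eq_card hts]

variable (G) in
/-- In an `r`-regular graph, a common neighbour `a` with `|N v ∩ N a| = r - 1` is never escaping,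
by `Adj.neighborFinset_subset_insert`. -/
def escapingCommonNeighbors (v u : V) : Finset V :=
  {a ∈ G.neighborFinset u ∩ G.neighborFinset v |
    ¬G.neighborFinset a ⊆ insert v (G.neighborFinset v)}

theorem escapingCommonNeighbors_subset :
    G.escapingCommonNeighbors v u ⊆ G.neighborFinset u ∩ G.neighborFinset v :=
  filter_subset _ _

theorem sum_card_inter_neighborFinset_add_le (hG : G.IsRegularOfDegree r) (hvu : G.Adj v u) :
    ∑ w ∈ G.neighborFinset v, #(G.neighborFinset v ∩ G.neighborFinset w)
        + (r - 1 - #(G.neighborFinset v ∩ G.neighborFinset u))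
        + #(G.escapingCommonNeighbors v u)
      ≤ #(G.neighborFinset v ∩ G.neighborFinset u) + (r - 1) * (r - 1) := by
  set F := G.escapingCommonNeighbors v u
  let B := (G.neighborFinset v \ G.neighborFinset u).erase u
  have hu : u ∈ G.neighborFinset v := by simpa
  have hB : #B = r - 1 - #(G.neighborFinset v ∩ G.neighborFinset u) := by
    rw [card_erase_of_mem (by simpa using hvu), card_sdiff, inter_comm,
      card_neighborFinset_eq_degree, hG v]
    omega
  have hdisj : Disjoint B F := Finset.disjoint_left.2 fun _ hwB hwF =>
    (mem_sdiff.1 (mem_of_mem_erase hwB)).2 (mem_inter.1 (escapingCommonNeighbors_subset hwF)).1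
  have hsub : B ∪ F ⊆ (G.neighborFinset v).erase u := union_subset
    (erase_subset_erase _ sdiff_subset) fun w hw => mem_erase.2
      ⟨by rintro rfl; simpa using (mem_inter.1 (escapingCommonNeighbors_subset hw)).1,
        (mem_inter.1 (escapingCommonNeighbors_subset hw)).2⟩
  have hlt : ∀ w ∈ B ∪ F, #(G.neighborFinset v ∩ G.neighborFinset w) < r - 1 := by
    intro w hw
    rcases mem_union.1 hw with hwB | hwF
    · obtain ⟨hwu, hw⟩ := mem_erase.1 hwB
      simp only [mem_sdiff, mem_neighborFinset] at hw
      have := card_inter_neighborFinset_add_two_le hw.1 hvu hwu fun h => hw.2 h.symm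
      rw [hG v] at this
      omega
    · simp only [F, escapingCommonNeighbors, mem_filter, mem_inter, mem_neighborFinset] at hwF
      by_contra! h
      exact hwF.2 (Adj.neighborFinset_subset_insert hwF.1.2 (by rw [hG w]; omega))
  have hle : ∀ w ∈ (G.neighborFinset v).erase u,
      #(G.neighborFinset v ∩ G.neighborFinset w) ≤ r - 1 := fun w hw => by
    have := ((mem_neighborFinset _ _ _).1 (mem_of_mem_erase hw)).card_inter_neighborFinset_lt
    rw [hG v] at this
    omega
  have key := sum_add_card_le_card_mul hsub hle hlt
  rw [card_union_of_disjoint hdisj, hB, card_erase_of_mem hu, card_neighborFinset_eq_degree,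
    hG v] at key
  rw [← add_sum_erase _ _ hu]
  omega

theorem card_inter_le_of_neighborFinset_subset_insert
    (hw : w ∈ G.neighborFinset u ∩ G.neighborFinset v)
    (hN : G.neighborFinset w ⊆ insert v (G.neighborFinset v)) :
    #(G.neighborFinset u ∩ G.neighborFinset w) ≤
      #(G.neighborFinset u ∩ G.neighborFinset v) := by
  have hsub : G.neighborFinset u ∩ G.neighborFinset w ⊆
      insert v ((G.neighborFinset u ∩ G.neighborFinset v).erase w) := by
    intro z hz
    obtain ⟨hzu, hzw⟩ := mem_inter.1 hz
    rcases mem_insert.1 (hN hzw) with rfl | hzv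
    · exact mem_insert_self _ _
    · exact mem_insert_of_mem (mem_erase.2 ⟨((mem_neighborFinset _ _ _).1 hzw).ne',
        mem_inter.2 ⟨hzu, hzv⟩⟩)
  calc #(G.neighborFinset u ∩ G.neighborFinset w)
      _ ≤ #((G.neighborFinset u ∩ G.neighborFinset v).erase w) + 1 :=
        (card_le_card hsub).trans (card_insert_le _ _)
      _ = #(G.neighborFinset u ∩ G.neighborFinset v) := by
        rw [card_erase_of_mem hw]
        have := card_pos.2 ⟨w, hw⟩
        omega

theorem inter_neighborFinset_subset_escapingCommonNeighbors_union {x : V}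
    (hx : x ∈ G.neighborFinset u \ insert v (G.neighborFinset v)) :
    G.neighborFinset u ∩ G.neighborFinset x ⊆
      G.escapingCommonNeighbors v u ∪
        (G.neighborFinset u \ insert v (G.neighborFinset v)).erase x := by
  intro z hz
  obtain ⟨hzu, hzx⟩ := mem_inter.1 hz
  have hxz : x ∈ G.neighborFinset z := by simpa [adj_comm] using hzx
  by_cases hzv : z ∈ insert v (G.neighborFinset v)
  · rcases mem_insert.1 hzv with rfl | hzv
    · exact absurd (mem_insert_of_mem hxz) (mem_sdiff.1 hx).2
    · exact mem_union_left _ (mem_filter.2 ⟨mem_inter.2 ⟨hzu, hzv⟩,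
        fun hsub => (mem_sdiff.1 hx).2 (hsub hxz)⟩)
  · exact mem_union_right _
      (mem_erase.2 ⟨((mem_neighborFinset _ _ _).1 hzx).ne', mem_sdiff.2 ⟨hzu, hzv⟩⟩)

theorem sum_card_inter_neighborFinset_le (hG : G.IsRegularOfDegree r) (hvu : G.Adj v u) :
    ∑ w ∈ G.neighborFinset u, #(G.neighborFinset u ∩ G.neighborFinset w) ≤
      #(G.neighborFinset v ∩ G.neighborFinset u)
        + (#(G.neighborFinset v ∩ G.neighborFinset u) - #(G.escapingCommonNeighbors v u))
          * #(G.neighborFinset v ∩ G.neighborFinset u)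
        + #(G.escapingCommonNeighbors v u) * (r - 1)
        + (r - 1 - #(G.neighborFinset v ∩ G.neighborFinset u))
          * (#(G.escapingCommonNeighbors v u)
            + (r - 2 - #(G.neighborFinset v ∩ G.neighborFinset u))) := by
  rw [inter_comm (G.neighborFinset v)]
  set F := G.escapingCommonNeighbors v u
  set A := G.neighborFinset u ∩ G.neighborFinset v
  set X := G.neighborFinset u \ insert v (G.neighborFinset v)
  have hv : v ∈ G.neighborFinset u := by simpa using hvu.symm
  have hvA : v ∉ A := by simp [A]
  have hX : #X = r - 1 - #A := by
    have : #A + 1 + #X = r := by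
      rw [← hG u, ← card_neighborFinset_eq_degree,
        ← card_inter_add_card_sdiff (G.neighborFinset u) (insert v (G.neighborFinset v)),
        inter_insert_of_mem hv, card_insert_of_notMem hvA]
    omega
  have hsplit : ∑ w ∈ G.neighborFinset u, #(G.neighborFinset u ∩ G.neighborFinset w) =
      #A + ∑ w ∈ A \ F, #(G.neighborFinset u ∩ G.neighborFinset w)
        + ∑ w ∈ F, #(G.neighborFinset u ∩ G.neighborFinset w)
        + ∑ w ∈ X, #(G.neighborFinset u ∩ G.neighborFinset w) := by
    rw [← sum_inter_add_sum_sdiff (G.neighborFinset u) (insert v (G.neighborFinset v)),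
      inter_insert_of_mem hv, sum_insert hvA, ← sum_sdiff escapingCommonNeighbors_subset]
    ring
  have hfull : ∑ w ∈ A \ F, #(G.neighborFinset u ∩ G.neighborFinset w) ≤ #(A \ F) * #A := by
    refine sum_le_card_nsmul _ _ _ fun w hw => ?_
    obtain ⟨hwA, hwF⟩ := mem_sdiff.1 hw
    exact card_inter_le_of_neighborFinset_subset_insert hwA
      (not_not.1 fun h => hwF (mem_filter.2 ⟨hwA, h⟩))
  have hescaping : ∑ w ∈ F, #(G.neighborFinset u ∩ G.neighborFinset w) ≤ #F * (r - 1) := by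
    refine sum_le_card_nsmul _ _ _ fun w hw => ?_
    have huw : G.Adj u w := by simpa using (mem_inter.1 (escapingCommonNeighbors_subset hw)).1
    have := huw.card_inter_neighborFinset_lt
    rw [hG u] at this
    omega
  have hrest : ∑ w ∈ X, #(G.neighborFinset u ∩ G.neighborFinset w) ≤ #X * (#F + (#X - 1)) := by
    refine sum_le_card_nsmul _ _ _ fun x hx => ?_
    calc #(G.neighborFinset u ∩ G.neighborFinset x)
        _ ≤ #F + #(X.erase x) := (card_le_card
          (inter_neighborFinset_subset_escapingCommonNeighbors_union hx)).trans (card_union_le _ _)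
        _ = #F + (#X - 1) := by rw [card_erase_of_mem hx]
  rw [card_sdiff_of_subset escapingCommonNeighbors_subset] at hfull
  rw [hX, show r - 1 - #A - 1 = r - 2 - #A by omega] at hrest
  rw [hsplit]
  exact add_le_add (add_le_add (add_le_add le_rfl hfull) hescaping) hrest

end SimpleGraph

/-- For `c ∈ {13, 14}`, no (6,c)-constant graph exists: there is no finite
simple graph on a nonempty vertex set that is 6-regular and in which the
subgraph induced by the open neighbourhood of every vertex has exactly `c`
edges. -/
theorem no_six_thirteen_or_fourteen_constant_graph :
    ∀ c ∈ ({13, 14} : Set ℕ),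
      ¬ ∃ (V : Type) (_ : Fintype V) (_ : Nonempty V) (G : SimpleGraph V),
        (∀ v : V, Nat.card (G.neighborSet v) = 6) ∧
        (∀ v : V, nbhdEdgeCount G v = c) := by
  rintro c hc ⟨V, _, ⟨v⟩, G, hdeg, hcount⟩
  classical
  have hG : G.IsRegularOfDegree 6 := fun w => by
    rw [← card_neighborSet_eq_degree, ← Nat.card_eq_fintype_card, hdeg]
  have hsum (w : V) :
      ∑ x ∈ G.neighborFinset w, #(G.neighborFinset w ∩ G.neighborFinset x) = 2 * c := by
    rw [← two_mul_nbhdEdgeCount_s16, hcount]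
  have hc : c = 13 ∨ c = 14 := by simpa using hc
  obtain ⟨u, hu, hd⟩ :
      ∃ u ∈ G.neighborFinset v, #(G.neighborFinset v ∩ G.neighborFinset u) < 5 := by
    refine exists_lt_of_sum_lt ?_
    rw [hsum, sum_const, card_neighborFinset_eq_degree, hG v, smul_eq_mul]
    omega
  have hvu : G.Adj v u := by simpa using hu
  have hvsum := sum_card_inter_neighborFinset_add_le hG hvu
  have husum := sum_card_inter_neighborFinset_le hG hvu
  have hf : #(G.escapingCommonNeighbors v u) ≤ #(G.neighborFinset v ∩ G.neighborFinset u) := by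
    rw [inter_comm]
    exact card_le_card escapingCommonNeighbors_subset
  rw [hsum] at hvsum husum
  generalize #(G.neighborFinset v ∩ G.neighborFinset u) = d at *
  generalize #(G.escapingCommonNeighbors v u) = f at *
  rcases hc with rfl | rfl <;> interval_cases d <;> omega
end

section
/- There exists no finite simple graph on a nonempty vertex set that is 5-regular and in which the subgraph induced by the open neighbourhood of every vertex has exactly 8 edges; that is, no (5,8)-constant graph exists. -/
namespace SimpleGraph

open Finset

variable {V : Type*} {G : SimpleGraph V}

/-- `N[a] = N[b]` for distinct vertices `a`, `b`, stated without closed neighbourhoods. -/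
def IsClosedTwin (G : SimpleGraph V) (a b : V) : Prop :=
  G.Adj a b ∧ ∀ ⦃x⦄, x ≠ a → x ≠ b → (G.Adj a x ↔ G.Adj b x)

namespace IsClosedTwin

variable {a a' x : V}

theorem symm (h : G.IsClosedTwin a a') : G.IsClosedTwin a' a :=
  ⟨h.1.symm, fun _ ha' ha => (h.2 ha ha').symm⟩

theorem adj_of_adj (h : G.IsClosedTwin a a') (hx : x ≠ a') (hax : G.Adj a x) : G.Adj a' x :=
  (h.2 hax.ne' hx).1 hax

theorem not_adj_of_not_adj (h : G.IsClosedTwin a a') (hx : x ≠ a) (hax : ¬ G.Adj a x) :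
    ¬ G.Adj a' x :=
  fun ha'x => hax (h.symm.adj_of_adj hx ha'x)

theorem ne_of_not_adj (h : G.IsClosedTwin a a') (hax : ¬ G.Adj a x) : a' ≠ x := by
  rintro rfl
  exact hax h.1

end IsClosedTwin

variable [Fintype V] [DecidableEq V] [DecidableRel G.Adj]

theorem sum_card_neighborFinset_inter (v : V) :
    ∑ u ∈ G.neighborFinset v, #(G.neighborFinset u ∩ G.neighborFinset v) =
      2 * nbhdEdgeCount G v := by
  have hdeg (u : G.neighborSet v) :
      (G.induce (G.neighborSet v)).degree u = #(G.neighborFinset u ∩ G.neighborFinset v) := by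
    rw [← card_neighborFinset_eq_degree, ← card_map, map_neighborFinset_induce]
    rfl
  rw [nbhdEdgeCount, Nat.card_eq_fintype_card, ← edgeFinset_card,
    ← sum_degrees_eq_twice_card_edges]
  simp only [hdeg]
  exact (sum_set_coe (G.neighborSet v)).symm

theorem card_neighborFinset_inter_add_card_le {v x : V} {T : Finset V}
    (hT : T ⊆ G.neighborFinset v) (hxT : Disjoint (G.neighborFinset x) T) :
    #(G.neighborFinset x ∩ G.neighborFinset v) + #T ≤ G.degree v := by
  rw [← card_neighborFinset_eq_degree, ← card_union_of_disjoint (hxT.mono_left inter_subset_left)]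
  exact card_le_card (union_subset inter_subset_right hT)

theorem card_neighborFinset_inter_add_one_le {v x : V} (hx : G.Adj v x) :
    #(G.neighborFinset x ∩ G.neighborFinset v) + 1 ≤ G.degree v := by
  simpa using card_neighborFinset_inter_add_card_le (T := {x}) (by simpa using hx) (by simp)

theorem card_neighborFinset_inter_add_three_le {v x y z : V} (hx : G.Adj v x) (hy : G.Adj v y)
    (hz : G.Adj v z) (hxy : x ≠ y) (hxz : x ≠ z) (hyz : y ≠ z) (hnxy : ¬ G.Adj x y)
    (hnxz : ¬ G.Adj x z) :
    #(G.neighborFinset x ∩ G.neighborFinset v) + 3 ≤ G.degree v := by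
  have hT : #({x, y, z} : Finset V) = 3 := card_eq_three.2 ⟨x, y, z, hxy, hxz, hyz, rfl⟩
  rw [← hT]
  exact card_neighborFinset_inter_add_card_le (by simp [insert_subset_iff, hx, hy, hz])
    (by simp [hnxy, hnxz])

theorem isClosedTwin_of_degree_le_card_inter_add_one {u v : V} (huv : G.Adj u v)
    (hdeg : G.degree u ≤ G.degree v)
    (hcard : G.degree v ≤ #(G.neighborFinset u ∩ G.neighborFinset v) + 1) :
    G.IsClosedTwin u v := by
  have hv : G.neighborFinset u ∩ G.neighborFinset v = (G.neighborFinset v).erase u := by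
    refine eq_of_subset_of_card_le (fun x hx => ?_) ?_
    · simp only [mem_inter, mem_neighborFinset] at hx
      exact mem_erase.2 ⟨hx.1.ne', (mem_neighborFinset _ _ _).2 hx.2⟩
    · rw [card_erase_of_mem ((mem_neighborFinset _ _ _).2 huv.symm), card_neighborFinset_eq_degree]
      omega
  have hu : G.neighborFinset u ∩ G.neighborFinset v = (G.neighborFinset u).erase v := by
    refine eq_of_subset_of_card_le (fun x hx => ?_) ?_
    · simp only [mem_inter, mem_neighborFinset] at hx
      exact mem_erase.2 ⟨hx.2.ne', (mem_neighborFinset _ _ _).2 hx.1⟩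
    · rw [card_erase_of_mem ((mem_neighborFinset _ _ _).2 huv), card_neighborFinset_eq_degree]
      omega
  refine ⟨huv, fun x hxu hxv => ?_⟩
  have hx := congrArg (x ∈ ·) (hu.symm.trans hv)
  simpa [hxu, hxv] using hx

theorem exists_isClosedTwin {d : ℕ} (hG : G.IsRegularOfDegree d) (v : V)
    (h : d * (d - 2) < ∑ u ∈ G.neighborFinset v, #(G.neighborFinset u ∩ G.neighborFinset v)) :
    ∃ u, G.IsClosedTwin u v := by
  rw [← hG v, ← card_neighborFinset_eq_degree, ← smul_eq_mul, ← sum_const] at h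
  obtain ⟨u, hu, hlt⟩ := exists_lt_of_sum_lt h
  rw [mem_neighborFinset] at hu
  have := card_neighborFinset_inter_add_one_le hu
  refine ⟨u, isClosedTwin_of_degree_le_card_inter_add_one hu.symm (by rw [hG u, hG v]) ?_⟩
  rw [← card_neighborFinset_eq_degree] at this ⊢
  omega

theorem exists_not_adj_of_sum_lt (v : V)
    (h : ∑ u ∈ G.neighborFinset v, #(G.neighborFinset u ∩ G.neighborFinset v) <
      G.degree v * (G.degree v - 1)) :
    ∃ a b, G.Adj v a ∧ G.Adj v b ∧ a ≠ b ∧ ¬ G.Adj a b := by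
  rw [← card_neighborFinset_eq_degree, ← smul_eq_mul, ← sum_const] at h
  obtain ⟨a, ha, hlt⟩ := exists_lt_of_sum_lt h
  have hsub : ¬ (G.neighborFinset v).erase a ⊆ G.neighborFinset a := fun hsub => by
    have := card_le_card (subset_inter hsub (erase_subset a _))
    rw [card_erase_of_mem ha] at this
    omega
  obtain ⟨b, hb, hab⟩ := not_subset.1 hsub
  obtain ⟨hba, hb⟩ := mem_erase.1 hb
  exact ⟨a, b, (mem_neighborFinset _ _ _).1 ha, (mem_neighborFinset _ _ _).1 hb, hba.symm,
    fun h => hab ((mem_neighborFinset _ _ _).2 h)⟩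

theorem sum_card_neighborFinset_inter_add_le {v : V} {Q : Finset V} {k : ℕ}
    (hQ : Q ⊆ G.neighborFinset v)
    (hk : ∀ x ∈ Q, #(G.neighborFinset x ∩ G.neighborFinset v) + k + 1 ≤ G.degree v) :
    ∑ u ∈ G.neighborFinset v, #(G.neighborFinset u ∩ G.neighborFinset v) + #Q * k ≤
      G.degree v * (G.degree v - 1) := by
  have hQk : #Q * k = ∑ u ∈ G.neighborFinset v, if u ∈ Q then k else 0 := by
    rw [sum_ite_mem, inter_eq_right.2 hQ, sum_const, smul_eq_mul]
  rw [hQk, ← sum_add_distrib, ← card_neighborFinset_eq_degree, ← smul_eq_mul, ← sum_const]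
  refine sum_le_sum fun u hu => ?_
  have := card_neighborFinset_inter_add_one_le ((mem_neighborFinset _ _ _).1 hu)
  split_ifs with huQ
  · have := hk u huQ
    rw [← card_neighborFinset_eq_degree] at this
    omega
  · rw [← card_neighborFinset_eq_degree] at this
    omega

theorem sum_card_neighborFinset_inter_add_eight_le_of_isClosedTwin {v a b a' b' : V}
    (ha : G.Adj v a) (hb : G.Adj v b) (hab : a ≠ b) (hn : ¬ G.Adj a b) (ha' : G.IsClosedTwin a a')
    (hb' : G.IsClosedTwin b b') :
    ∑ u ∈ G.neighborFinset v, #(G.neighborFinset u ∩ G.neighborFinset v) + 8 ≤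
      G.degree v * (G.degree v - 1) := by
  have ha'b : a' ≠ b := ha'.ne_of_not_adj hn
  have hna'b : ¬ G.Adj a' b := ha'.not_adj_of_not_adj hab.symm hn
  have hb'a : b' ≠ a := hb'.ne_of_not_adj fun h => hn h.symm
  have hnb'a : ¬ G.Adj b' a := hb'.not_adj_of_not_adj hab fun h => hn h.symm
  have hb'a' : b' ≠ a' := hb'.ne_of_not_adj fun h => hna'b h.symm
  have hnb'a' : ¬ G.Adj b' a' := hb'.not_adj_of_not_adj ha'b fun h => hna'b h.symm
  have hva' : G.Adj v a' := (ha'.adj_of_adj (by rintro rfl; exact hna'b hb) ha.symm).symm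
  have hvb' : G.Adj v b' := (hb'.adj_of_adj (by rintro rfl; exact hnb'a ha) hb.symm).symm
  have hQ : #({a, a', b, b'} : Finset V) = 4 :=
    card_eq_four.2 ⟨a, a', b, b', ha'.1.ne, hab, hb'a.symm, ha'b, hb'a'.symm, hb'.1.ne, rfl⟩
  have key := sum_card_neighborFinset_inter_add_le (k := 2)
    (by simp [insert_subset_iff, ha, hva', hb, hvb'] : {a, a', b, b'} ⊆ G.neighborFinset v) <| by
    simp only [mem_insert, mem_singleton]
    rintro x (rfl | rfl | rfl | rfl)
    · exact card_neighborFinset_inter_add_three_le ha hb hvb' hab hb'a.symm hb'.1.ne hn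
        fun h => hnb'a h.symm
    · exact card_neighborFinset_inter_add_three_le hva' hb hvb' ha'b hb'a'.symm hb'.1.ne hna'b
        fun h => hnb'a' h.symm
    · exact card_neighborFinset_inter_add_three_le hb ha hva' hab.symm ha'b.symm ha'.1.ne
        (fun h => hn h.symm) fun h => hna'b h.symm
    · exact card_neighborFinset_inter_add_three_le hvb' ha hva' hb'a hb'a' ha'.1.ne hnb'a hnb'a'
  rwa [hQ] at key

end SimpleGraph

/-- No (5,8)-constant graph exists: there is no finite simple graph on a
nonempty vertex set that is 5-regular and in which the subgraph induced by
the open neighbourhood of every vertex has exactly 8 edges. -/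
theorem no_five_eight_constant_graph :
    ¬ ∃ (V : Type) (_ : Fintype V) (_ : Nonempty V) (G : SimpleGraph V),
      (∀ v : V, Nat.card (G.neighborSet v) = 5) ∧
      (∀ v : V, nbhdEdgeCount G v = 8) := by
  rintro ⟨V, _, ⟨v⟩, G, hcard, hedges⟩
  classical
  have hreg : G.IsRegularOfDegree 5 := fun w => by
    rw [← G.card_neighborSet_eq_degree, ← Nat.card_eq_fintype_card, hcard w]
  have hsum (w : V) :
      ∑ u ∈ G.neighborFinset w, (G.neighborFinset u ∩ G.neighborFinset w).card = 16 := by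
    rw [G.sum_card_neighborFinset_inter, hedges]
  obtain ⟨a, b, ha, hb, hab, hn⟩ := G.exists_not_adj_of_sum_lt v (by rw [hsum, hreg v]; norm_num)
  obtain ⟨a', ha'⟩ := G.exists_isClosedTwin hreg a (by rw [hsum]; norm_num)
  obtain ⟨b', hb'⟩ := G.exists_isClosedTwin hreg b (by rw [hsum]; norm_num)
  have := G.sum_card_neighborFinset_inter_add_eight_le_of_isClosedTwin ha hb hab hn ha'.symm
    hb'.symm
  rw [hsum, hreg v] at this
  omega
end
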